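/- arXiv:2205.14972 — 5 statements merged into one kernel-verified Lean document; each statement's English description precedes it below -/
import Mathlib

section
/- Let M be a matroid of rank 3 on a finite ground set E, and let H₁, H₂, H₃ be three pairwise distinct flats of M of rank 2. If the intersection F := H₁ ∩ H₂ ∩ H₃ is a flat of rank 1, then H₃ is not contained in H₁ ∪ H₂. -/
/-- The rank (in `ℕ∞`) of a set `X` in a matroid `M`: the supremum of the cardinalities
of independent subsets of `X`. -/
noncomputable def Matroid.setRank {α : Type*} (M : Matroid α) (X : Set α) : ℕ∞ :=
  ⨆ I ∈ {I : Set α | M.Indep I ∧ I ⊆ X}, I.encard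

/-!
Rank is strictly monotone along proper inclusions `F ⊂ G` with `F` a flat: a point of `G \ F`
lies outside the closure of `F`, so it extends a basis of `F`. If `H₃ ⊆ H₁ ∪ H₂`, then `H₃`
lies in neither `H₁` nor `H₂` (distinct flats of equal rank), so some `a ∈ H₃ \ H₁` lies in
`H₂` and some `b ∈ H₃` lies outside `H₂`. This gives the chain of flats
`H₁ ∩ H₂ ∩ H₃ ⊂ H₂ ∩ H₃ ⊂ H₃`, whose ranks would have to climb from `1` to beyond `2`.
-/

namespace Matroid

open Set

variable {α : Type*} {M : Matroid α} {F G : Set α}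

lemma setRank_eq_eRk (M : Matroid α) (X : Set α) : M.setRank X = M.eRk X := by
  refine le_antisymm (iSup₂_le fun I hI ↦ hI.1.encard_le_eRk_of_subset hI.2) ?_
  obtain ⟨I, hI⟩ := M.exists_isBasis' X
  rw [← hI.encard_eq_eRk]
  exact le_biSup (fun I ↦ I.encard) (show I ∈ {I | M.Indep I ∧ I ⊆ X} from ⟨hI.indep, hI.subset⟩)

lemma IsFlat.inter (hF : M.IsFlat F) (hG : M.IsFlat G) : M.IsFlat (F ∩ G) := by
  rw [inter_eq_iInter]
  exact IsFlat.iInter fun b ↦ by cases b <;> assumption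

lemma IsFlat.eRk_add_one_le_of_ssubset (hF : M.IsFlat F) (hFG : F ⊂ G) (hG : G ⊆ M.E) :
    M.eRk F + 1 ≤ M.eRk G := by
  obtain ⟨e, heG, heF⟩ := exists_of_ssubset hFG
  rw [← eRk_insert_eq_add_one ⟨hG heG, by rwa [hF.closure]⟩]
  exact M.eRk_mono (insert_subset heG hFG.subset)

lemma IsFlat.eq_of_subset_of_eRk_le (hF : M.IsFlat F) (hG : G ⊆ M.E) (hFG : F ⊆ G)
    (hle : M.eRk G ≤ M.eRk F) (hF_fin : M.eRk F ≠ ⊤) : F = G := by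
  by_contra hne
  have := (hF.eRk_add_one_le_of_ssubset (hFG.ssubset_of_ne hne) hG).trans hle
  exact ((ENat.add_one_le_iff hF_fin).1 this).false

end Matroid

theorem stmt_0_general {α : Type*} (M : Matroid α)
    (H₁ H₂ H₃ : Set α)
    (hH₁ : M.IsFlat H₁) (hH₂ : M.IsFlat H₂) (hH₃ : M.IsFlat H₃)
    (h13 : H₁ ≠ H₃) (h23 : H₂ ≠ H₃)
    (hr₁ : M.setRank H₁ = 2) (hr₂ : M.setRank H₂ = 2) (hr₃ : M.setRank H₃ = 2)
    (hFflat : M.IsFlat (H₁ ∩ H₂ ∩ H₃)) (hFr : M.setRank (H₁ ∩ H₂ ∩ H₃) = 1) :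
    ¬ H₃ ⊆ H₁ ∪ H₂ := by
  simp only [Matroid.setRank_eq_eRk] at hr₁ hr₂ hr₃ hFr
  intro hsub
  have not_subset {H : Set α} (hH : M.IsFlat H) (hr : M.eRk H = 2) (hne : H ≠ H₃) :
      ¬ H₃ ⊆ H := fun hH₃H ↦
    hne (hH₃.eq_of_subset_of_eRk_le hH.subset_ground hH₃H (by rw [hr, hr₃]) (by simp [hr₃])).symm
  obtain ⟨a, haH₃, haH₁⟩ := Set.not_subset_iff_exists_mem_notMem.1 (not_subset hH₁ hr₁ h13)
  obtain ⟨b, hbH₃, hbH₂⟩ := Set.not_subset_iff_exists_mem_notMem.1 (not_subset hH₂ hr₂ h23)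
  have haH₂ : a ∈ H₂ := (hsub haH₃).resolve_left haH₁
  have hF_ssubset : H₁ ∩ H₂ ∩ H₃ ⊂ H₂ ∩ H₃ :=
    (Set.ssubset_iff_of_subset (Set.inter_subset_inter_left H₃ Set.inter_subset_right)).2
      ⟨a, ⟨haH₂, haH₃⟩, fun h ↦ haH₁ h.1.1⟩
  have hG_ssubset : H₂ ∩ H₃ ⊂ H₃ :=
    (Set.ssubset_iff_of_subset Set.inter_subset_right).2 ⟨b, hbH₃, fun h ↦ hbH₂ h.1⟩
  have hG_flat := hH₂.inter hH₃
  have hF_rk := hFflat.eRk_add_one_le_of_ssubset hF_ssubset hG_flat.subset_ground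
  have hG_rk := hG_flat.eRk_add_one_le_of_ssubset hG_ssubset hH₃.subset_ground
  have hchain := (add_le_add_left hF_rk 1).trans hG_rk
  rw [hFr, hr₃] at hchain
  norm_num at hchain

/-- **Lemma (matroid flats).** Let `M` be a matroid of rank 3 on a finite ground set,
and `H₁, H₂, H₃` pairwise distinct flats of rank 2. If `F = H₁ ∩ H₂ ∩ H₃` is a flat of
rank 1, then `H₃` is not contained in `H₁ ∪ H₂`. -/
theorem stmt_0 {α : Type*} (M : Matroid α) (hfin : M.E.Finite)
    (hrk : M.setRank M.E = 3)
    (H₁ H₂ H₃ : Set α)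
    (hH₁ : M.IsFlat H₁) (hH₂ : M.IsFlat H₂) (hH₃ : M.IsFlat H₃)
    (h12 : H₁ ≠ H₂) (h13 : H₁ ≠ H₃) (h23 : H₂ ≠ H₃)
    (hr₁ : M.setRank H₁ = 2) (hr₂ : M.setRank H₂ = 2) (hr₃ : M.setRank H₃ = 2)
    (hFflat : M.IsFlat (H₁ ∩ H₂ ∩ H₃)) (hFr : M.setRank (H₁ ∩ H₂ ∩ H₃) = 1) :
    ¬ H₃ ⊆ H₁ ∪ H₂ :=
  stmt_0_general M H₁ H₂ H₃ hH₁ hH₂ hH₃ h13 h23 hr₁ hr₂ hr₃ hFflat hFr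
end

section
/- Let m ≥ 1, let α ≠ β be two exponent vectors in ℕ^m, and let a, b be nonzero real numbers. The principal ideal generated by the binomial a·x^α + b·x^β in the polynomial ring ℝ[x₁,…,x_m] contains a nonzero polynomial all of whose nonzero coefficients are positive if and only if a and b have the same sign. -/
open MvPolynomial

/-- If `a*b < 0`, the univariate binomial `a r^k + b r^l` (with `k < l`) has a positive root. -/
lemma aux_root (k l : ℕ) (hkl : k < l) (a b : ℝ) (hb : b ≠ 0) (hab : a * b < 0) :
    ∃ r : ℝ, 0 < r ∧ a * r ^ k + b * r ^ l = 0 := by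
  have hc : 0 < -a / b := by
    rcases mul_neg_iff.mp hab with ⟨ha', hb'⟩ | ⟨ha', hb'⟩
    · exact div_pos_of_neg_of_neg (by linarith) hb'
    · exact div_pos (by linarith) hb'
  set d : ℕ := l - k with hd
  have hd0 : d ≠ 0 := by omega
  set r : ℝ := (-a / b) ^ ((d : ℝ)⁻¹) with hr
  have hrpos : 0 < r := Real.rpow_pos_of_pos hc _
  have hrd : r ^ d = -a / b := by
    rw [hr, ← Real.rpow_natCast ((-a / b) ^ ((d : ℝ)⁻¹)) d, ← Real.rpow_mul hc.le,
      inv_mul_cancel₀ (by exact_mod_cast hd0 : (d : ℝ) ≠ 0), Real.rpow_one]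
  refine ⟨r, hrpos, ?_⟩
  have hl : l = k + d := by omega
  rw [hl, pow_add, hrd]
  field_simp
  ring

/-- **Binomial positivity criterion.** For `m ≥ 1`, distinct exponent vectors `α ≠ β`
and nonzero reals `a, b`, the principal ideal generated by `a·x^α + b·x^β` in
`ℝ[x₁,…,x_m]` contains a nonzero polynomial all of whose nonzero coefficients are
positive iff `a` and `b` have the same sign. -/
theorem stmt_5 (m : ℕ) (hm : 1 ≤ m) (α β : Fin m →₀ ℕ) (hαβ : α ≠ β)
    (a b : ℝ) (ha : a ≠ 0) (hb : b ≠ 0) :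
    (∃ g ∈ Ideal.span {(MvPolynomial.monomial α a + MvPolynomial.monomial β b :
        MvPolynomial (Fin m) ℝ)},
      g ≠ 0 ∧ ∀ e : Fin m →₀ ℕ, MvPolynomial.coeff e g ≠ 0 → 0 < MvPolynomial.coeff e g) ↔
    0 < a * b := by
  set p : MvPolynomial (Fin m) ℝ := monomial α a + monomial β b with hp
  constructor
  · rintro ⟨g, hg, hg0, hpos⟩
    by_contra hab
    have hab' : a * b < 0 := lt_of_le_of_ne (not_lt.mp hab) (mul_ne_zero ha hb)
    have hex : ∃ i, α i ≠ β i := by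
      by_contra h
      push_neg at h
      exact hαβ (Finsupp.ext h)
    obtain ⟨i0, hi0⟩ := hex
    obtain ⟨r, hrpos, hzero⟩ : ∃ r : ℝ, 0 < r ∧ a * r ^ α i0 + b * r ^ β i0 = 0 := by
      rcases lt_or_gt_of_ne hi0 with h | h
      · exact aux_root _ _ h a b hb hab'
      · obtain ⟨r, hr, hz⟩ := aux_root _ _ h b a ha (by linarith [mul_comm a b])
        exact ⟨r, hr, by linarith⟩
    set c : Fin m → ℝ := fun i => if i = i0 then r else 1 with hc
    have hcpos : ∀ i, 0 < c i := by
      intro i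
      simp only [hc]
      split_ifs <;> norm_num [hrpos]
    have hprod : ∀ s : Fin m →₀ ℕ, (∏ i, c i ^ s i) = r ^ s i0 := by
      intro s
      rw [Finset.prod_eq_single i0]
      · simp [hc]
      · intro j _ hj; simp [hc, hj]
      · simp
    have hevalp : eval c p = a * r ^ α i0 + b * r ^ β i0 := by
      simp [hp, eval_monomial, Finsupp.prod_pow, hprod]
    obtain ⟨q, hq⟩ := Ideal.mem_span_singleton'.mp hg
    have hzg : eval c g = 0 := by
      rw [← hq, map_mul, hevalp, hzero, mul_zero]
    have hgt : 0 < eval c g := by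
      rw [eval_eq]
      apply Finset.sum_pos
      · intro e he
        exact mul_pos (hpos e (mem_support_iff.mp he))
          (Finset.prod_pos fun i _ => pow_pos (hcpos i) _)
      · exact support_nonempty.mpr hg0
    linarith
  · intro hab
    have ha2 : 0 < a * a := mul_self_pos.mpr ha
    have hb2 : 0 < b * b := mul_self_pos.mpr hb
    refine ⟨p * p, Ideal.mem_span_singleton'.mpr ⟨p, rfl⟩, ?_, ?_⟩
    all_goals
      have key : p * p = (monomial (α + α) (a * a) + monomial (α + β) (a * b)) +
          (monomial (α + β) (a * b) + monomial (β + β) (b * b)) := by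
        simp only [hp, add_mul, mul_add, monomial_mul]
        rw [add_comm β α, mul_comm b a]
    · have hne1 : α + β ≠ α + α := fun h => hαβ (add_left_cancel h).symm
      have hne2 : β + β ≠ α + α := by
        intro h
        apply hαβ
        ext i
        have := DFunLike.congr_fun h i
        simp only [Finsupp.add_apply] at this
        omega
      intro h0
      have : coeff (α + α) (p * p) = a * a := by
        rw [key]
        simp [coeff_monomial, if_neg hne1, if_neg hne2, Ne.symm hαβ]
      rw [h0] at this
      simp at this
      exact ha this
    · intro e he
      rw [key] at he ⊢
      simp only [coeff_add, coeff_monomial] at he ⊢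
      split_ifs at he ⊢ <;> first | linarith | norm_num at he
end

section
/- Let T be a maximal phylogenetic tree with d + n leaves, where d + n ≥ 5, and let k be the number of elementary splits of T. Then T admits a (d,n)-bicoloring if and only if k ≤ min(d, n), and in that case the number of (d,n)-bicolorings of T equals 2^k · C(d+n−2k, d−k), where C denotes the binomial coefficient. -/
/-- The leaves of the split induced by the (internal) edge `{u, v}` on the side of `u`:
the leaves of `G` (vertices of degree 1) reachable from `u` after deleting the edge
`{u, v}`. -/
def splitLeaves {V : Type*} [Fintype V] (G : SimpleGraph V) [DecidableRel G.Adj]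
    (u v : V) : Set V :=
  {w | G.degree w = 1 ∧ (G.deleteEdges {s(u, v)}).Reachable u w}

/-- The set of internal edges of `G` inducing an elementary split, i.e. edges joining
two non-leaf vertices such that one of the two parts of the induced partition of the
leaves has exactly 2 elements. -/
def elementarySplitEdges {V : Type*} [Fintype V] (G : SimpleGraph V)
    [DecidableRel G.Adj] : Set (Sym2 V) :=
  {e | ∃ u v, e = s(u, v) ∧ G.Adj u v ∧ G.degree u ≠ 1 ∧ G.degree v ≠ 1 ∧
    ((splitLeaves G u v).ncard = 2 ∨ (splitLeaves G v u).ncard = 2)}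

/-- A `(d,n)`-bicoloring of the leaves of `G`: a 2-coloring `c` of the leaves (`true` =
red, `false` = green) with exactly `d` red and `n` green leaves, such that for every
internal edge both parts of the induced split contain leaves of both colors. -/
def IsBicoloring {V : Type*} [Fintype V] (G : SimpleGraph V) [DecidableRel G.Adj]
    (d n : ℕ) (c : {v : V // G.degree v = 1} → Bool) : Prop :=
  {l : {v : V // G.degree v = 1} | c l = true}.ncard = d ∧
  {l : {v : V // G.degree v = 1} | c l = false}.ncard = n ∧
  ∀ u v, G.Adj u v → G.degree u ≠ 1 → G.degree v ≠ 1 →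
    (∃ l : {v : V // G.degree v = 1}, (l : V) ∈ splitLeaves G u v ∧ c l = true) ∧
    (∃ l : {v : V // G.degree v = 1}, (l : V) ∈ splitLeaves G u v ∧ c l = false) ∧
    (∃ l : {v : V // G.degree v = 1}, (l : V) ∈ splitLeaves G v u ∧ c l = true) ∧
    (∃ l : {v : V // G.degree v = 1}, (l : V) ∈ splitLeaves G v u ∧ c l = false)

/-!
Call a vertex adjacent to exactly two leaves a cherry. Every side of an internal edge contains
both leaves of some cherry (follow the side away from the edge until only leaves remain), and
the two leaves of a cherry form one side of the edge joining the cherry to its third neighbour.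
Hence a colouring is a bicoloring exactly when every cherry sees both colours. These edges are
the elementary splits, and with at least five leaves distinct cherries give distinct edges, so
`k` counts the cherries. A bicoloring thus colours the `2k` cherry leaves in one of `2^k` ways,
always with `k` red leaves among them, and chooses the remaining `d - k` red leaves freely among
the other `d + n - 2k`.
-/

open Function

section BichromaticPairs

variable {L P : Type*}

lemma ncard_eq_true_add_ncard_eq_false [Finite L] (c : L → Bool) :
    {l | c l = true}.ncard + {l | c l = false}.ncard = Nat.card L := by
  rw [← Set.ncard_add_ncard_compl {l | c l = true}]
  congr
  ext
  simp

lemma card_le_ncard_of_forall_exists_mem [Finite L] {S : P → Set L}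
    (hS : Pairwise (Disjoint on S)) {c : L → Bool} {b : Bool}
    (hc : ∀ p, ∃ l ∈ S p, c l = b) :
    Nat.card P ≤ {l | c l = b}.ncard := by
  choose f hfS hfc using hc
  rw [← Nat.card_coe_set_eq]
  refine Nat.card_le_card_of_injective (fun p => ⟨f p, hfc p⟩) fun p q hpq => ?_
  by_contra hne
  exact (hS hne).ne_of_mem (hfS p) (hfS q) (congrArg Subtype.val hpq)

lemma card_ncard_eq_true_eq_choose [Finite L] (m : ℕ) :
    Nat.card {g : L → Bool // {l | g l = true}.ncard = m} = (Nat.card L).choose m := by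
  classical
  cases nonempty_fintype L
  rw [Nat.card_eq_fintype_card (α := L), ← Fintype.card_finset_len, ← Nat.card_eq_fintype_card]
  let e : (L → Bool) ≃ Finset L :=
    { toFun g := Finset.univ.filter (g · = true)
      invFun s l := decide (l ∈ s)
      left_inv g := by ext; simp
      right_inv s := by ext; simp }
  refine Nat.card_congr (e.subtypeEquiv fun g => ?_)
  simp [e, Set.ncard_eq_toFinset_card']

lemma forall_exists_mem_pair_iff (c : L → Bool) (a a' : L) :
    (∀ b, ∃ l ∈ ({a, a'} : Set L), c l = b) ↔ c a = !c a' := by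
  cases h : c a <;> cases h' : c a' <;> simp [h, h']

def pairElem (x y : P → L) (pb : P × Bool) : L := bif pb.2 then y pb.1 else x pb.1

abbrev unpaired (x y : P → L) : Set L := (Set.range (pairElem x y))ᶜ

variable {x y : P → L}

lemma pairElem_injective (hxy : ∀ p, x p ≠ y p)
    (hdisj : Pairwise (Disjoint on fun p => ({x p, y p} : Set L))) :
    Injective (pairElem x y) := by
  rintro ⟨p, b⟩ ⟨q, b'⟩ h
  obtain rfl : p = q := by
    by_contra hne
    exact (hdisj hne).ne_of_mem (by cases b <;> simp [pairElem])
      (by cases b' <;> simp [pairElem]) h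
  cases b <;> cases b' <;> simp_all [pairElem, eq_comm]

lemma ncard_unpaired [Finite L] [Finite P] (hφ : Injective (pairElem x y)) :
    (unpaired x y).ncard = Nat.card L - 2 * Nat.card P := by
  rw [unpaired, Set.ncard_compl, Set.ncard_range_of_injective hφ, Nat.card_prod,
    Nat.card_eq_fintype_card (α := Bool), Fintype.card_bool, mul_comm]

open scoped Classical in
noncomputable def pairSplit (hφ : Injective (pairElem x y)) : P × Bool ⊕ unpaired x y ≃ L :=
  (Equiv.sumCongr (Equiv.ofInjective _ hφ) (Equiv.refl _)).trans (Equiv.Set.sumCompl _)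

section PairSplit

variable (hφ : Injective (pairElem x y))

@[simp] lemma pairSplit_inl (pb : P × Bool) : pairSplit hφ (.inl pb) = pairElem x y pb := by
  simp [pairSplit]

@[simp] lemma pairSplit_inr (z : unpaired x y) : pairSplit hφ (.inr z) = z := by
  simp [pairSplit]

@[simp] lemma pairSplit_symm_left (p : P) : (pairSplit hφ).symm (x p) = .inl (p, false) :=
  (Equiv.symm_apply_eq _).mpr (by simp [pairElem])

@[simp] lemma pairSplit_symm_right (p : P) : (pairSplit hφ).symm (y p) = .inl (p, true) :=
  (Equiv.symm_apply_eq _).mpr (by simp [pairElem])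

@[simp] lemma pairSplit_symm_unpaired (z : unpaired x y) : (pairSplit hφ).symm z = .inr z :=
  (Equiv.symm_apply_eq _).mpr (by simp)

noncomputable def bichromaticEquiv :
    {c : L → Bool // ∀ p, c (x p) = !c (y p)} ≃ (unpaired x y → Bool) × (P → Bool) where
  toFun c := (fun z => c.1 z, fun p => c.1 (y p))
  invFun gf := ⟨fun l => Sum.elim (fun pb => bif pb.2 then gf.2 pb.1 else !gf.2 pb.1) gf.1
      ((pairSplit hφ).symm l), fun p => by simp⟩
  left_inv c := by
    ext l
    obtain ⟨z, rfl⟩ := (pairSplit hφ).surjective l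
    rcases z with ⟨p, _ | _⟩ | z <;> simp [pairElem, c.2]
  right_inv gf := by
    ext p <;> simp

end PairSplit

lemma ncard_eq_true_of_bichromatic [Finite L] [Finite P] (hφ : Injective (pairElem x y))
    {c : L → Bool} (hc : ∀ p, c (x p) = !c (y p)) :
    {l | c l = true}.ncard = {z : unpaired x y | c z = true}.ncard + Nat.card P := by
  let eTrue : {pb : P × Bool // c (pairElem x y pb) = true} ≃ P :=
    { toFun pb := pb.1.1
      invFun p := ⟨(p, c (y p)), by cases h : c (y p) <;> simp [pairElem, hc, h]⟩
      left_inv := by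
        rintro ⟨⟨p, b⟩, hb⟩
        have : c (y p) = b := by cases b <;> simpa [pairElem, hc] using hb
        simp [this]
      right_inv _ := rfl }
  simp only [← Nat.card_coe_set_eq, Set.coe_ofPred]
  rw [Nat.card_congr
      (((pairSplit hφ).subtypeEquiv fun _ => Iff.rfl).symm.trans Equiv.subtypeSum),
    Nat.card_sum, add_comm]
  simp only [pairSplit_inl, pairSplit_inr, Nat.card_congr eTrue]

theorem ncard_bichromatic_colorings [Finite L] [Finite P] {S : P → Set L}
    (hS : ∀ p, (S p).ncard = 2) (hdisj : Pairwise (Disjoint on S)) {d : ℕ}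
    (hd : Nat.card P ≤ d) :
    {c : L → Bool | (∀ p b, ∃ l ∈ S p, c l = b) ∧ {l | c l = true}.ncard = d}.ncard =
      2 ^ Nat.card P * (Nat.card L - 2 * Nat.card P).choose (d - Nat.card P) := by
  choose x y hxy hxyS using fun p => Set.ncard_eq_two.mp (hS p)
  obtain rfl : S = fun p => {x p, y p} := funext hxyS
  have hφ := pairElem_injective hxy hdisj
  let eCount :
      {c : {c : L → Bool // ∀ p, c (x p) = !c (y p)} // {l | c.1 l = true}.ncard = d} ≃
      {g : unpaired x y → Bool // {z | g z = true}.ncard = d - Nat.card P} × (P → Bool) :=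
    ((bichromaticEquiv hφ).subtypeEquiv
      (q := fun gf => {z | gf.1 z = true}.ncard = d - Nat.card P) fun c => by
        change _ ↔ {z : unpaired x y | c.1 z = true}.ncard = _
        rw [ncard_eq_true_of_bichromatic hφ c.2]
        omega).trans
      (Equiv.prodSubtypeFstEquivSubtypeProd
        (p := fun g : unpaired x y → Bool => {z | g z = true}.ncard = d - Nat.card P))
  simp only [forall_exists_mem_pair_iff]
  rw [← Nat.card_coe_set_eq, Set.coe_ofPred,
    ← Nat.card_congr (Equiv.subtypeSubtypeEquivSubtypeInter _ _), Nat.card_congr eCount,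
    Nat.card_prod, Nat.card_fun, card_ncard_eq_true_eq_choose, Nat.card_coe_set_eq,
    ncard_unpaired hφ, Nat.card_eq_fintype_card (α := Bool), Fintype.card_bool, mul_comm]

end BichromaticPairs

namespace SimpleGraph

section Sides

variable {V : Type*} {G : SimpleGraph V} {u v w x y : V}

def side (G : SimpleGraph V) (u v : V) : Set V :=
  {w | (G.deleteEdges {s(u, v)}).Reachable u w}

lemma mem_side_iff_exists_walk : w ∈ G.side u v ↔ ∃ p : G.Walk u w, s(u, v) ∉ p.edges :=
  reachable_deleteEdges_iff_exists_walk

lemma self_mem_side : u ∈ G.side u v := Reachable.refl u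

lemma IsAcyclic.notMem_side (hG : G.IsAcyclic) (h : G.Adj u v) : v ∉ G.side u v :=
  isAcyclic_iff_forall_adj_isBridge.mp hG h

lemma IsAcyclic.disjoint_side (hG : G.IsAcyclic) (h : G.Adj u v) :
    Disjoint (G.side u v) (G.side v u) := by
  refine Set.disjoint_left.mpr fun w hu hv => hG.notMem_side h (hu.trans ?_)
  rw [side, Set.mem_ofPred_eq, Sym2.eq_swap] at hv
  exact hv.symm

lemma Connected.mem_side_or_mem_side (hG : G.Connected) (u v w : V) :
    w ∈ G.side u v ∨ w ∈ G.side v u := by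
  obtain ⟨p⟩ := hG.preconnected w u
  induction p with
  | nil => exact Or.inl self_mem_side
  | @cons a b u hab _ ih =>
    by_cases he : s(a, b) = s(u, v)
    · rcases Sym2.eq_iff.mp he with ⟨rfl, -⟩ | ⟨rfl, -⟩
      · exact Or.inl self_mem_side
      · exact Or.inr self_mem_side
    · have hba : (G.deleteEdges {s(u, v)}).Reachable b a := by
        refine (deleteEdges_adj.mpr ⟨hab.symm, ?_⟩).reachable
        rwa [Set.mem_singleton_iff, Sym2.eq_swap]
      refine ih.imp (fun hb => hb.trans hba) fun hb => hb.trans ?_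
      rwa [Sym2.eq_swap]

lemma IsAcyclic.side_subset_side (hG : G.IsAcyclic) (h : G.Adj u x) (hxy : x ≠ y) :
    G.side x u ⊆ G.side u y := by
  classical
  intro w hw
  obtain ⟨p, hp⟩ := mem_side_iff_exists_walk.mp hw
  have hu : u ∉ p.support := fun hu => hG.notMem_side h.symm <| mem_side_iff_exists_walk.mpr
    ⟨p.takeUntil u hu, fun he => hp (p.edges_takeUntil_subset_edges hu he)⟩
  refine mem_side_iff_exists_walk.mpr ⟨Walk.cons h p, ?_⟩
  rw [Walk.edges_cons, List.mem_cons, not_or, Sym2.congr_right]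
  exact ⟨Ne.symm hxy, fun he => hu (p.fst_mem_support_of_mem_edges he)⟩

lemma exists_adj_mem_side_of_mem_side (hw : w ∈ G.side u v) (hwu : w ≠ u) :
    ∃ x, G.Adj u x ∧ x ≠ v ∧ w ∈ G.side x u := by
  classical
  obtain ⟨p, hp⟩ := mem_side_iff_exists_walk.mp hw
  have hq : s(u, v) ∉ p.bypass.edges := fun he => hp (p.edges_bypass_subset_edges he)
  generalize p.bypass = q, p.bypass_isPath = hpath at hq
  cases q with
  | nil => exact absurd rfl hwu
  | @cons _ x _ hux q =>
    rw [Walk.cons_isPath_iff] at hpath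
    rw [Walk.edges_cons, List.mem_cons, not_or, Sym2.congr_right] at hq
    refine ⟨x, hux, Ne.symm hq.1, mem_side_iff_exists_walk.mpr ⟨q, fun he => ?_⟩⟩
    exact hpath.2 (q.snd_mem_support_of_mem_edges he)

lemma IsAcyclic.mem_side_iff (hG : G.IsAcyclic) :
    w ∈ G.side u v ↔ w = u ∨ ∃ x, G.Adj u x ∧ x ≠ v ∧ w ∈ G.side x u := by
  refine ⟨fun hw => or_iff_not_imp_left.mpr (exists_adj_mem_side_of_mem_side hw), ?_⟩
  rintro (rfl | ⟨x, hux, hxv, hw⟩)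
  · exact self_mem_side
  · exact hG.side_subset_side hux hxv hw

lemma IsAcyclic.side_ssubset_side (hG : G.IsAcyclic) (h : G.Adj u x) (hxv : x ≠ v) :
    G.side x u ⊂ G.side u v :=
  (Set.ssubset_iff_of_subset (hG.side_subset_side h hxv)).mpr
    ⟨u, self_mem_side, hG.notMem_side h.symm⟩

theorem IsAcyclic.side_induction [Finite V] (hG : G.IsAcyclic) {P : V → V → Prop}
    (step : ∀ u v, G.Adj u v → (∀ x, G.Adj u x → x ≠ v → P x u) → P u v)
    (u v : V) (h : G.Adj u v) : P u v := by
  induction hN : (G.side u v).ncard using Nat.strong_induction_on generalizing u v with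
  | _ N ih =>
    subst hN
    exact step u v h fun x hux hxv =>
      ih _ (Set.ncard_lt_ncard (hG.side_ssubset_side hux hxv)) x u hux.symm rfl

end Sides

variable {V : Type*} [Fintype V] {G : SimpleGraph V} [DecidableRel G.Adj] {u v w x y p q t : V}

section SplitLeaves

lemma mem_splitLeaves : w ∈ splitLeaves G u v ↔ G.degree w = 1 ∧ w ∈ G.side u v := Iff.rfl

lemma eq_of_adj_of_degree_eq_one (hu : G.degree u = 1) (hx : G.Adj u x) (hy : G.Adj u y) :
    x = y :=
  (degree_eq_one_iff_existsUnique_adj.mp hu).unique hx hy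

lemma exists_adj_ne_of_degree_ne_one (hu : G.degree u ≠ 1) (h : G.Adj u v) :
    ∃ x, G.Adj u x ∧ x ≠ v := by
  by_contra! hx
  exact hu (degree_eq_one_iff_existsUnique_adj.mpr ⟨v, h, hx⟩)

lemma exists_adj_iff_of_degree_eq_three (hu : G.degree u = 3) (h : G.Adj u v) :
    ∃ a b, a ≠ b ∧ a ≠ v ∧ b ≠ v ∧ ∀ x, G.Adj u x ↔ x = v ∨ x = a ∨ x = b := by
  classical
  have hv : v ∈ G.neighborFinset u := (mem_neighborFinset _ _ _).mpr h
  obtain ⟨a, b, hab, hset⟩ : ∃ a b, a ≠ b ∧ (G.neighborFinset u).erase v = {a, b} := by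
    rw [← Finset.card_eq_two, Finset.card_erase_of_mem hv, card_neighborFinset_eq_degree, hu]
  have hmem : ∀ x, x ∈ (G.neighborFinset u).erase v ↔ x = a ∨ x = b := by simp [hset]
  refine ⟨a, b, hab, Finset.ne_of_mem_erase ((hmem a).mpr (.inl rfl)),
    Finset.ne_of_mem_erase ((hmem b).mpr (.inr rfl)), fun x => ?_⟩
  rw [← hmem, Finset.mem_erase, mem_neighborFinset]
  by_cases hx : x = v <;> simp [hx, h]

lemma side_eq_singleton (hu : G.degree u = 1) (h : G.Adj u v) : G.side u v = {u} := by
  refine Set.eq_singleton_iff_unique_mem.mpr ⟨self_mem_side, fun w hw => ?_⟩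
  by_contra hwu
  obtain ⟨x, hux, hxv, -⟩ := exists_adj_mem_side_of_mem_side hw hwu
  exact hxv (eq_of_adj_of_degree_eq_one hu hux h)

lemma IsAcyclic.splitLeaves_subset_splitLeaves (hG : G.IsAcyclic) (h : G.Adj u x)
    (hxy : x ≠ y) : splitLeaves G x u ⊆ splitLeaves G u y :=
  fun _ hw => ⟨hw.1, hG.side_subset_side h hxy hw.2⟩

lemma IsAcyclic.disjoint_splitLeaves (hG : G.IsAcyclic) (h : G.Adj u v) :
    Disjoint (splitLeaves G u v) (splitLeaves G v u) :=
  (hG.disjoint_side h).mono (fun _ hw => hw.2) (fun _ hw => hw.2)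

lemma IsAcyclic.disjoint_splitLeaves_of_ne (hG : G.IsAcyclic) (hx : G.Adj u x)
    (hy : G.Adj u y) (hxy : x ≠ y) : Disjoint (splitLeaves G x u) (splitLeaves G y u) :=
  (hG.disjoint_splitLeaves hy).mono_left (hG.splitLeaves_subset_splitLeaves hx hxy)

lemma ncard_splitLeaves_add_ncard_splitLeaves (hconn : G.Connected) (hG : G.IsAcyclic)
    (h : G.Adj u v) :
    (splitLeaves G u v).ncard + (splitLeaves G v u).ncard = {w | G.degree w = 1}.ncard := by
  rw [← Set.ncard_union_eq (hG.disjoint_splitLeaves h)]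
  congr
  ext w
  simp only [Set.mem_union, mem_splitLeaves, Set.mem_ofPred_eq, ← and_or_left,
    and_iff_left_iff_imp]
  exact fun _ => hconn.mem_side_or_mem_side u v w

lemma IsAcyclic.splitLeaves_nonempty (hG : G.IsAcyclic) (h : G.Adj u v) :
    (splitLeaves G u v).Nonempty := by
  refine hG.side_induction (P := fun u v => (splitLeaves G u v).Nonempty)
    (fun u v h ih => ?_) u v h
  by_cases hu : G.degree u = 1
  · exact ⟨u, hu, self_mem_side⟩
  · obtain ⟨x, hux, hxv⟩ := exists_adj_ne_of_degree_ne_one hu h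
    exact (ih x hux hxv).mono (hG.splitLeaves_subset_splitLeaves hux hxv)

lemma IsAcyclic.ncard_splitLeaves_eq_add (hG : G.IsAcyclic) (hu : G.degree u ≠ 1) {a b : V}
    (hab : a ≠ b) (hav : a ≠ v) (hbv : b ≠ v)
    (hnbr : ∀ x, G.Adj u x ↔ x = v ∨ x = a ∨ x = b) :
    (splitLeaves G u v).ncard = (splitLeaves G a u).ncard + (splitLeaves G b u).ncard := by
  have hua : G.Adj u a := (hnbr a).mpr (.inr (.inl rfl))
  have hub : G.Adj u b := (hnbr b).mpr (.inr (.inr rfl))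
  rw [← Set.ncard_union_eq (hG.disjoint_splitLeaves_of_ne hua hub hab)]
  congr
  ext w
  rw [Set.mem_union, mem_splitLeaves, hG.mem_side_iff, mem_splitLeaves, mem_splitLeaves]
  constructor
  · rintro ⟨hw, rfl | ⟨x, hux, hxv, hwx⟩⟩
    · exact absurd hw hu
    · rcases (hnbr x).mp hux with rfl | rfl | rfl
      · exact absurd rfl hxv
      · exact .inl ⟨hw, hwx⟩
      · exact .inr ⟨hw, hwx⟩
  · rintro (⟨hw, hwa⟩ | ⟨hw, hwb⟩)
    · exact ⟨hw, .inr ⟨a, hua, hav, hwa⟩⟩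
    · exact ⟨hw, .inr ⟨b, hub, hbv, hwb⟩⟩

lemma IsAcyclic.two_le_ncard_splitLeaves (hG : G.IsAcyclic) (hu : G.degree u = 3)
    (h : G.Adj u v) : 2 ≤ (splitLeaves G u v).ncard := by
  obtain ⟨a, b, hab, hav, hbv, hnbr⟩ := exists_adj_iff_of_degree_eq_three hu h
  have hua : G.Adj u a := (hnbr a).mpr (.inr (.inl rfl))
  have hub : G.Adj u b := (hnbr b).mpr (.inr (.inr rfl))
  rw [hG.ncard_splitLeaves_eq_add (by omega) hab hav hbv hnbr]
  have ha := (Set.ncard_pos (Set.toFinite _)).mpr (hG.splitLeaves_nonempty hua.symm)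
  have hb := (Set.ncard_pos (Set.toFinite _)).mpr (hG.splitLeaves_nonempty hub.symm)
  omega

lemma IsAcyclic.degree_eq_one_of_ncard_splitLeaves_eq_two (hG : G.IsAcyclic)
    (h3 : ∀ v, G.degree v = 1 ∨ G.degree v = 3) (h : G.Adj u v) (hu : G.degree u ≠ 1)
    (h2 : (splitLeaves G u v).ncard = 2) (hx : G.Adj u x) (hxv : x ≠ v) : G.degree x = 1 := by
  obtain ⟨a, b, hab, hav, hbv, hnbr⟩ :=
    exists_adj_iff_of_degree_eq_three ((h3 u).resolve_left hu) h
  have hua : G.Adj u a := (hnbr a).mpr (.inr (.inl rfl))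
  have hub : G.Adj u b := (hnbr b).mpr (.inr (.inr rfl))
  rw [hG.ncard_splitLeaves_eq_add hu hab hav hbv hnbr] at h2
  have ha := (Set.ncard_pos (Set.toFinite _)).mpr (hG.splitLeaves_nonempty hua.symm)
  have hb := (Set.ncard_pos (Set.toFinite _)).mpr (hG.splitLeaves_nonempty hub.symm)
  refine (h3 x).resolve_right fun hx3 => ?_
  have := hG.two_le_ncard_splitLeaves hx3 hx.symm
  rcases (hnbr x).mp hx with rfl | rfl | rfl
  · exact absurd rfl hxv
  all_goals omega

end SplitLeaves

section Cherries

def leafNeighbors (G : SimpleGraph V) [DecidableRel G.Adj] (p : V) : Finset V :=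
  (G.neighborFinset p).filter (G.degree · = 1)

/-- `p` is the common neighbour of the two leaves of a cherry. -/
def IsCherry (G : SimpleGraph V) [DecidableRel G.Adj] (p : V) : Prop :=
  G.degree p ≠ 1 ∧ (G.leafNeighbors p).card = 2

lemma mem_leafNeighbors : x ∈ G.leafNeighbors p ↔ G.Adj p x ∧ G.degree x = 1 := by
  simp [leafNeighbors]

lemma IsAcyclic.leafNeighbors_subset_splitLeaves (hG : G.IsAcyclic) (ht : G.degree t ≠ 1) :
    ↑(G.leafNeighbors p) ⊆ splitLeaves G p t := by
  intro x hx
  obtain ⟨hpx, hx1⟩ := mem_leafNeighbors.mp hx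
  exact ⟨hx1, hG.side_subset_side hpx (by rintro rfl; exact ht hx1) self_mem_side⟩

lemma isCherry_iff (h3 : ∀ v, G.degree v = 1 ∨ G.degree v = 3) (hp : G.degree p ≠ 1)
    (hpt : G.Adj p t) (ht : G.degree t ≠ 1) :
    G.IsCherry p ↔ ∀ x, G.Adj p x → x ≠ t → G.degree x = 1 := by
  classical
  have hcard : ((G.neighborFinset p).erase t).card = 2 := by
    rw [Finset.card_erase_of_mem ((mem_neighborFinset _ _ _).mpr hpt),
      card_neighborFinset_eq_degree, (h3 p).resolve_left hp]
  have hL : G.leafNeighbors p = ((G.neighborFinset p).erase t).filter (G.degree · = 1) := by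
    rw [Finset.filter_erase, leafNeighbors, Finset.erase_eq_of_notMem (by simp [ht])]
  rw [IsCherry, and_iff_right hp, hL, ← hcard, Finset.card_filter_eq_iff]
  simp only [Finset.mem_erase, mem_neighborFinset, and_imp]
  exact ⟨fun hleaf x hx hxt => hleaf x hxt hx, fun hleaf x hxt hx => hleaf x hx hxt⟩

lemma IsCherry.exists_stem (h3 : ∀ v, G.degree v = 1 ∨ G.degree v = 3) (hp : G.IsCherry p) :
    ∃ t, G.Adj p t ∧ G.degree t ≠ 1 := by
  by_contra! hleaf
  have hL : G.leafNeighbors p = G.neighborFinset p :=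
    Finset.filter_true_of_mem fun x hx => hleaf x ((mem_neighborFinset _ _ _).mp hx)
  have := hp.2
  rw [hL, card_neighborFinset_eq_degree, (h3 p).resolve_left hp.1] at this
  omega

lemma IsCherry.splitLeaves_eq (hG : G.IsAcyclic) (h3 : ∀ v, G.degree v = 1 ∨ G.degree v = 3)
    (hp : G.IsCherry p) (hpt : G.Adj p t) (ht : G.degree t ≠ 1) :
    splitLeaves G p t = ↑(G.leafNeighbors p) := by
  refine subset_antisymm (fun w ⟨hw, hwp⟩ => ?_) (hG.leafNeighbors_subset_splitLeaves ht)
  rcases hG.mem_side_iff.mp hwp with rfl | ⟨x, hpx, hxt, hwx⟩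
  · exact absurd hw hp.1
  · have hx := (isCherry_iff h3 hp.1 hpt ht).mp hp x hpx hxt
    rw [side_eq_singleton hx hpx.symm, Set.mem_singleton_iff] at hwx
    subst hwx
    exact mem_leafNeighbors.mpr ⟨hpx, hw⟩

lemma IsAcyclic.exists_isCherry_subset_splitLeaves (hG : G.IsAcyclic)
    (h3 : ∀ v, G.degree v = 1 ∨ G.degree v = 3) (h : G.Adj u v) (hu : G.degree u ≠ 1)
    (hv : G.degree v ≠ 1) :
    ∃ p, G.IsCherry p ∧ ↑(G.leafNeighbors p) ⊆ splitLeaves G u v := by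
  revert hu hv
  refine hG.side_induction (P := fun u v => G.degree u ≠ 1 → G.degree v ≠ 1 →
      ∃ p, G.IsCherry p ∧ ↑(G.leafNeighbors p) ⊆ splitLeaves G u v)
    (fun u v h ih hu hv => ?_) u v h
  by_cases hleaf : ∀ x, G.Adj u x → x ≠ v → G.degree x = 1
  · exact ⟨u, (isCherry_iff h3 hu h hv).mpr hleaf, hG.leafNeighbors_subset_splitLeaves hv⟩
  · push Not at hleaf
    obtain ⟨x, hux, hxv, hx⟩ := hleaf
    obtain ⟨p, hp, hsub⟩ := ih x hux hxv hx hu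
    exact ⟨p, hp, hsub.trans (hG.splitLeaves_subset_splitLeaves hux hxv)⟩

lemma IsAcyclic.isCherry_of_ncard_splitLeaves_eq_two (hG : G.IsAcyclic)
    (h3 : ∀ v, G.degree v = 1 ∨ G.degree v = 3) (h : G.Adj u v) (hu : G.degree u ≠ 1)
    (hv : G.degree v ≠ 1) (h2 : (splitLeaves G u v).ncard = 2) : G.IsCherry u :=
  (isCherry_iff h3 hu h hv).mpr fun _ hx hxv =>
    hG.degree_eq_one_of_ncard_splitLeaves_eq_two h3 h hu h2 hx hxv

def cherryLeaves (G : SimpleGraph V) [DecidableRel G.Adj] (p : {p // G.IsCherry p}) :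
    Set {v : V // G.degree v = 1} :=
  {l | ↑l ∈ G.leafNeighbors p}

lemma ncard_cherryLeaves (p : {p // G.IsCherry p}) : (G.cherryLeaves p).ncard = 2 := by
  rw [← Set.ncard_image_of_injective _ Subtype.val_injective, ← p.2.2, ← Set.ncard_coe_finset]
  congr
  ext x
  refine ⟨by rintro ⟨l, hl, rfl⟩; exact hl, fun hx => ?_⟩
  exact ⟨⟨x, (mem_leafNeighbors.mp hx).2⟩, hx, rfl⟩

lemma pairwise_disjoint_cherryLeaves : Pairwise (Disjoint on G.cherryLeaves) := by
  refine fun p q hpq => Set.disjoint_left.mpr fun l hp hq => hpq (Subtype.ext ?_)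
  obtain ⟨hpl, hl⟩ := mem_leafNeighbors.mp hp
  exact eq_of_adj_of_degree_eq_one hl hpl.symm (mem_leafNeighbors.mp hq).1.symm

end Cherries

section ElementarySplits

def cherryStems (G : SimpleGraph V) [DecidableRel G.Adj] : Set (V × V) :=
  {pt | G.IsCherry pt.1 ∧ G.Adj pt.1 pt.2 ∧ G.degree pt.2 ≠ 1}

lemma elementarySplitEdges_eq_image (hG : G.IsAcyclic)
    (h3 : ∀ v, G.degree v = 1 ∨ G.degree v = 3) :
    elementarySplitEdges G = (fun pt : V × V => s(pt.1, pt.2)) '' G.cherryStems := by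
  ext e
  constructor
  · rintro ⟨u, v, rfl, h, hu, hv, h2 | h2⟩
    · exact ⟨(u, v), ⟨hG.isCherry_of_ncard_splitLeaves_eq_two h3 h hu hv h2, h, hv⟩, rfl⟩
    · refine ⟨(v, u), ⟨?_, h.symm, hu⟩, Sym2.eq_swap⟩
      exact hG.isCherry_of_ncard_splitLeaves_eq_two h3 h.symm hv hu h2
  · rintro ⟨⟨p, t⟩, ⟨hp, hpt, ht⟩, rfl⟩
    refine ⟨p, t, rfl, hpt, hp.1, ht, .inl ?_⟩
    rw [hp.splitLeaves_eq hG h3 hpt ht, Set.ncard_coe_finset, hp.2]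

lemma injOn_sym2_cherryStems (hconn : G.Connected) (hG : G.IsAcyclic)
    (h3 : ∀ v, G.degree v = 1 ∨ G.degree v = 3) (h5 : 5 ≤ {v | G.degree v = 1}.ncard) :
    Set.InjOn (fun pt : V × V => s(pt.1, pt.2)) G.cherryStems := by
  rintro ⟨p, t⟩ ⟨hp, hpt, ht⟩ ⟨p', t'⟩ ⟨hp', hpt', ht'⟩ he
  rcases Sym2.eq_iff.mp he with ⟨rfl, rfl⟩ | ⟨rfl, rfl⟩
  · rfl
  · -- two adjacent cherries would exhaust the leaves
    have := ncard_splitLeaves_add_ncard_splitLeaves hconn hG hpt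
    rw [hp.splitLeaves_eq hG h3 hpt ht, hp'.splitLeaves_eq hG h3 hpt' ht', Set.ncard_coe_finset,
      Set.ncard_coe_finset, hp.2, hp'.2] at this
    omega

lemma injOn_fst_cherryStems (h3 : ∀ v, G.degree v = 1 ∨ G.degree v = 3) :
    Set.InjOn Prod.fst G.cherryStems := by
  rintro ⟨p, t⟩ ⟨hp, hpt, ht⟩ ⟨_, t'⟩ ⟨-, hpt', ht'⟩ (rfl : p = _)
  by_contra hne
  exact ht' ((isCherry_iff h3 hp.1 hpt ht).mp hp t' hpt' fun h => hne (by rw [h]))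

lemma image_fst_cherryStems (h3 : ∀ v, G.degree v = 1 ∨ G.degree v = 3) :
    Prod.fst '' G.cherryStems = {p | G.IsCherry p} := by
  ext p
  constructor
  · rintro ⟨⟨p, t⟩, ⟨hp, -, -⟩, rfl⟩
    exact hp
  · intro hp
    obtain ⟨t, hpt, ht⟩ := hp.exists_stem h3
    exact ⟨(p, t), ⟨hp, hpt, ht⟩, rfl⟩

theorem ncard_elementarySplitEdges (hconn : G.Connected) (hG : G.IsAcyclic)
    (h3 : ∀ v, G.degree v = 1 ∨ G.degree v = 3) (h5 : 5 ≤ {v | G.degree v = 1}.ncard) :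
    (elementarySplitEdges G).ncard = Nat.card {p // G.IsCherry p} := by
  rw [elementarySplitEdges_eq_image hG h3, (injOn_sym2_cherryStems hconn hG h3 h5).ncard_image,
    ← (injOn_fst_cherryStems h3).ncard_image, image_fst_cherryStems h3]
  exact (Nat.card_coe_set_eq _).symm

end ElementarySplits

theorem isBicoloring_iff (hG : G.IsAcyclic) (h3 : ∀ v, G.degree v = 1 ∨ G.degree v = 3)
    {d n : ℕ} {c : {v : V // G.degree v = 1} → Bool} :
    IsBicoloring G d n c ↔ {l | c l = true}.ncard = d ∧ {l | c l = false}.ncard = n ∧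
      ∀ p b, ∃ l ∈ G.cherryLeaves p, c l = b := by
  refine Iff.rfl.and (Iff.rfl.and ⟨fun hsplit p b => ?_, fun hcherry u v h hu hv => ?_⟩)
  · obtain ⟨t, hpt, ht⟩ := p.2.exists_stem h3
    obtain ⟨htrue, hfalse, -, -⟩ := hsplit p t hpt p.2.1 ht
    rw [p.2.splitLeaves_eq hG h3 hpt ht] at htrue hfalse
    cases b
    exacts [hfalse, htrue]
  · have hside : ∀ u v, G.Adj u v → G.degree u ≠ 1 → G.degree v ≠ 1 → ∀ b,
        ∃ l : {v : V // G.degree v = 1}, ↑l ∈ splitLeaves G u v ∧ c l = b := by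
      intro u v h hu hv b
      obtain ⟨p, hp, hsub⟩ := hG.exists_isCherry_subset_splitLeaves h3 h hu hv
      obtain ⟨l, hl, hlb⟩ := hcherry ⟨p, hp⟩ b
      exact ⟨l, hsub hl, hlb⟩
    exact ⟨hside u v h hu hv true, hside u v h hu hv false, hside v u h.symm hv hu true,
      hside v u h.symm hv hu false⟩

lemma isBicoloring_iff_of_card_eq (hG : G.IsAcyclic) (h3 : ∀ v, G.degree v = 1 ∨ G.degree v = 3)
    {d n : ℕ} (hL : Nat.card {v : V // G.degree v = 1} = d + n)
    {c : {v : V // G.degree v = 1} → Bool} :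
    IsBicoloring G d n c ↔
      (∀ p b, ∃ l ∈ G.cherryLeaves p, c l = b) ∧ {l | c l = true}.ncard = d := by
  have := ncard_eq_true_add_ncard_eq_false c
  rw [isBicoloring_iff hG h3]
  constructor
  · rintro ⟨hd, -, hc⟩
    exact ⟨hc, hd⟩
  · rintro ⟨hc, hd⟩
    exact ⟨hd, by omega, hc⟩

end SimpleGraph

open SimpleGraph

/-- **Proposition (number of bicolorings).** Let `G` be a maximal phylogenetic tree
with `d + n ≥ 5` leaves and `k` elementary splits. Then `G` admits a
`(d,n)`-bicoloring iff `k ≤ min d n`, in which case the number of `(d,n)`-bicolorings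
is `2^k · C(d+n−2k, d−k)`. -/
theorem stmt_11 {V : Type*} [Fintype V] (G : SimpleGraph V) [DecidableRel G.Adj]
    (hconn : G.Connected) (hacyc : G.IsAcyclic)
    (hdeg : ∀ v, G.degree v = 1 ∨ G.degree v = 3)
    (d n k : ℕ) (hleaves : {v | G.degree v = 1}.ncard = d + n) (h5 : 5 ≤ d + n)
    (hk : (elementarySplitEdges G).ncard = k) :
    ((∃ c, IsBicoloring G d n c) ↔ k ≤ min d n) ∧
    (k ≤ min d n →
      {c : {v : V // G.degree v = 1} → Bool | IsBicoloring G d n c}.ncard =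
        2 ^ k * Nat.choose (d + n - 2 * k) (d - k)) := by
  have hL : Nat.card {v : V // G.degree v = 1} = d + n := (Nat.card_coe_set_eq _).trans hleaves
  have hP : Nat.card {p // G.IsCherry p} = k :=
    hk ▸ (ncard_elementarySplitEdges hconn hacyc hdeg (hleaves ▸ h5)).symm
  have hcount : k ≤ min d n →
      {c | IsBicoloring G d n c}.ncard = 2 ^ k * Nat.choose (d + n - 2 * k) (d - k) := by
    intro hkdn
    rw [show {c | IsBicoloring G d n c} =
        {c | (∀ p b, ∃ l ∈ G.cherryLeaves p, c l = b) ∧ {l | c l = true}.ncard = d} from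
        Set.ext fun _ => isBicoloring_iff_of_card_eq hacyc hdeg hL,
      ncard_bichromatic_colorings ncard_cherryLeaves pairwise_disjoint_cherryLeaves (by omega),
      hP, hL]
  refine ⟨⟨fun ⟨c, hc⟩ => ?_, fun hkdn => ?_⟩, hcount⟩
  · obtain ⟨hd, hn, hc⟩ := (isBicoloring_iff hacyc hdeg).mp hc
    have := card_le_ncard_of_forall_exists_mem pairwise_disjoint_cherryLeaves (hc · true)
    have := card_le_ncard_of_forall_exists_mem pairwise_disjoint_cherryLeaves (hc · false)
    omega
  · have hpos : {c | IsBicoloring G d n c}.ncard ≠ 0 := by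
      rw [hcount hkdn]
      exact Nat.mul_ne_zero (by positivity) (Nat.choose_pos (by omega)).ne'
    exact Set.nonempty_of_ncard_ne_zero hpos
end

section
/- Let w be a real d×n matrix. Then w has Barvinok rank at most 2 if and only if every 3×3 submatrix of w is positively tropically singular, i.e., for all row indices i₁ < i₂ < i₃ and column indices j₁ < j₂ < j₃, the minimum min_{τ ∈ S₃} (w_{i₁ j_{τ(1)}} + w_{i₂ j_{τ(2)}} + w_{i₃ j_{τ(3)}}) is attained both at some even permutation τ and at some odd permutation τ. -/
/-! Auxiliary definitions and lemmas for `stmt_15`. -/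

/-- Infimum over `Fin 2` is a binary min. -/
lemma bar2_iInf_fin2 (f : Fin 2 → ℝ) : (⨅ k : Fin 2, f k) = min (f 0) (f 1) := by
  apply le_antisymm
  · exact le_min (ciInf_le (Set.Finite.bddBelow (Set.finite_range f)) 0)
      (ciInf_le (Set.Finite.bddBelow (Set.finite_range f)) 1)
  · refine le_ciInf fun k => ?_
    fin_cases k
    · exact min_le_left _ _
    · exact min_le_right _ _

/-- Enumeration of `S₃`. -/
lemma bar2_perm3 (τ : Equiv.Perm (Fin 3)) :
    τ = 1 ∨ τ = Equiv.swap 0 1 * Equiv.swap 1 2 ∨ τ = Equiv.swap 1 2 * Equiv.swap 0 1 ∨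
    τ = Equiv.swap 1 2 ∨ τ = Equiv.swap 0 1 ∨ τ = Equiv.swap 0 2 := by
  revert τ; decide

/-- `GoodMin w R C` : the tropical `3×3` minor of `w` on rows `R` and columns `C` has
both an even and an odd minimizing permutation. -/
def GoodMin {d n : ℕ} (w : Matrix (Fin d) (Fin n) ℝ)
    (R : Fin 3 → Fin d) (C : Fin 3 → Fin n) : Prop :=
  ∃ τ τ' : Equiv.Perm (Fin 3),
    Equiv.Perm.sign τ = 1 ∧ Equiv.Perm.sign τ' = -1 ∧
    (∀ ρ : Equiv.Perm (Fin 3),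
      (∑ k, w (R k) (C (τ k))) ≤ ∑ k, w (R k) (C (ρ k))) ∧
    (∀ ρ : Equiv.Perm (Fin 3),
      (∑ k, w (R k) (C (τ' k))) ≤ ∑ k, w (R k) (C (ρ k)))

/-- Permuting the rows preserves `GoodMin`. -/
lemma bar2_rowperm {d n : ℕ} (w : Matrix (Fin d) (Fin n) ℝ)
    (R : Fin 3 → Fin d) (C : Fin 3 → Fin n) (π : Equiv.Perm (Fin 3))
    (h : GoodMin w R C) : GoodMin w (fun k => R (π k)) C := by
  obtain ⟨τ, τ', s1, s2, m1, m2⟩ := h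
  have key : ∀ σ : Equiv.Perm (Fin 3),
      (∑ k, w (R (π k)) (C (σ k))) = ∑ k, w (R k) (C ((σ * π⁻¹) k)) := by
    intro σ
    rw [← Equiv.sum_comp π (fun m => w (R m) (C ((σ * π⁻¹) m)))]
    refine Finset.sum_congr rfl fun k _ => ?_
    simp [Equiv.Perm.mul_apply]
  have hm : ∀ σ : Equiv.Perm (Fin 3),
      (∀ ρ : Equiv.Perm (Fin 3), (∑ k, w (R k) (C (σ k))) ≤ ∑ k, w (R k) (C (ρ k))) →
      ∀ ρ : Equiv.Perm (Fin 3), (∑ k, w (R (π k)) (C ((σ * π) k))) ≤ ∑ k, w (R (π k)) (C (ρ k)) := by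
    intro σ hσ ρ
    rw [key, key, mul_inv_cancel_right]
    exact hσ (ρ * π⁻¹)
  rcases Int.units_eq_one_or (Equiv.Perm.sign π) with hπ | hπ
  · exact ⟨τ * π, τ' * π, by rw [Equiv.Perm.sign_mul, s1, hπ, one_mul],
      by rw [Equiv.Perm.sign_mul, s2, hπ, mul_one], hm τ m1, hm τ' m2⟩
  · exact ⟨τ' * π, τ * π, by rw [Equiv.Perm.sign_mul, s2, hπ]; decide,
      by rw [Equiv.Perm.sign_mul, s1, hπ, one_mul], hm τ' m2, hm τ m1⟩

/-- Permuting the columns preserves `GoodMin`. -/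
lemma bar2_colperm {d n : ℕ} (w : Matrix (Fin d) (Fin n) ℝ)
    (R : Fin 3 → Fin d) (C : Fin 3 → Fin n) (π : Equiv.Perm (Fin 3))
    (h : GoodMin w R C) : GoodMin w R (fun k => C (π k)) := by
  obtain ⟨τ, τ', s1, s2, m1, m2⟩ := h
  have key : ∀ σ : Equiv.Perm (Fin 3),
      (∑ k, w (R k) (C (π (σ k)))) = ∑ k, w (R k) (C ((π * σ) k)) := fun σ => rfl
  have hm : ∀ σ : Equiv.Perm (Fin 3),
      (∀ ρ : Equiv.Perm (Fin 3), (∑ k, w (R k) (C (σ k))) ≤ ∑ k, w (R k) (C (ρ k))) →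
      ∀ ρ : Equiv.Perm (Fin 3), (∑ k, w (R k) (C (π ((π⁻¹ * σ) k)))) ≤ ∑ k, w (R k) (C (π (ρ k))) := by
    intro σ hσ ρ
    rw [key, key, mul_inv_cancel_left]
    exact hσ (π * ρ)
  rcases Int.units_eq_one_or (Equiv.Perm.sign π) with hπ | hπ
  · exact ⟨π⁻¹ * τ, π⁻¹ * τ', by rw [Equiv.Perm.sign_mul, Equiv.Perm.sign_inv, s1, hπ, one_mul],
      by rw [Equiv.Perm.sign_mul, Equiv.Perm.sign_inv, s2, hπ, one_mul], hm τ m1, hm τ' m2⟩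
  · exact ⟨π⁻¹ * τ', π⁻¹ * τ, by rw [Equiv.Perm.sign_mul, Equiv.Perm.sign_inv, s2, hπ]; decide,
      by rw [Equiv.Perm.sign_mul, Equiv.Perm.sign_inv, s1, hπ, mul_one], hm τ' m2, hm τ m1⟩
/-- From `GoodMin`, the minimum of the three "even" sums equals the minimum of the
three "odd" sums. -/
lemma bar2_sixmin {d n : ℕ} (w : Matrix (Fin d) (Fin n) ℝ)
    (R : Fin 3 → Fin d) (C : Fin 3 → Fin n) (h : GoodMin w R C) :
    min (w (R 0) (C 0) + w (R 1) (C 1) + w (R 2) (C 2))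
        (min (w (R 0) (C 1) + w (R 1) (C 2) + w (R 2) (C 0))
             (w (R 0) (C 2) + w (R 1) (C 0) + w (R 2) (C 1))) =
    min (w (R 0) (C 0) + w (R 1) (C 2) + w (R 2) (C 1))
        (min (w (R 0) (C 1) + w (R 1) (C 0) + w (R 2) (C 2))
             (w (R 0) (C 2) + w (R 1) (C 1) + w (R 2) (C 0))) := by
  obtain ⟨τ, τ', s1, s2, m1, m2⟩ := h
  have e1 : (∑ k, w (R k) (C ((1 : Equiv.Perm (Fin 3)) k)))
      = w (R 0) (C 0) + w (R 1) (C 1) + w (R 2) (C 2) := by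
    rw [Fin.sum_univ_three]; rfl
  have e2 : (∑ k, w (R k) (C ((Equiv.swap 0 1 * Equiv.swap 1 2 : Equiv.Perm (Fin 3)) k)))
      = w (R 0) (C 1) + w (R 1) (C 2) + w (R 2) (C 0) := by
    rw [Fin.sum_univ_three]
    have h0 : (Equiv.swap 0 1 * Equiv.swap 1 2 : Equiv.Perm (Fin 3)) 0 = 1 := by decide
    have h1 : (Equiv.swap 0 1 * Equiv.swap 1 2 : Equiv.Perm (Fin 3)) 1 = 2 := by decide
    have h2 : (Equiv.swap 0 1 * Equiv.swap 1 2 : Equiv.Perm (Fin 3)) 2 = 0 := by decide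
    rw [h0, h1, h2]
  have e3 : (∑ k, w (R k) (C ((Equiv.swap 1 2 * Equiv.swap 0 1 : Equiv.Perm (Fin 3)) k)))
      = w (R 0) (C 2) + w (R 1) (C 0) + w (R 2) (C 1) := by
    rw [Fin.sum_univ_three]
    have h0 : (Equiv.swap 1 2 * Equiv.swap 0 1 : Equiv.Perm (Fin 3)) 0 = 2 := by decide
    have h1 : (Equiv.swap 1 2 * Equiv.swap 0 1 : Equiv.Perm (Fin 3)) 1 = 0 := by decide
    have h2 : (Equiv.swap 1 2 * Equiv.swap 0 1 : Equiv.Perm (Fin 3)) 2 = 1 := by decide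
    rw [h0, h1, h2]
  have o1 : (∑ k, w (R k) (C ((Equiv.swap 1 2 : Equiv.Perm (Fin 3)) k)))
      = w (R 0) (C 0) + w (R 1) (C 2) + w (R 2) (C 1) := by
    rw [Fin.sum_univ_three]
    have h0 : (Equiv.swap 1 2 : Equiv.Perm (Fin 3)) 0 = 0 := by decide
    have h1 : (Equiv.swap 1 2 : Equiv.Perm (Fin 3)) 1 = 2 := by decide
    have h2 : (Equiv.swap 1 2 : Equiv.Perm (Fin 3)) 2 = 1 := by decide
    rw [h0, h1, h2]
  have o2 : (∑ k, w (R k) (C ((Equiv.swap 0 1 : Equiv.Perm (Fin 3)) k)))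
      = w (R 0) (C 1) + w (R 1) (C 0) + w (R 2) (C 2) := by
    rw [Fin.sum_univ_three]
    have h0 : (Equiv.swap 0 1 : Equiv.Perm (Fin 3)) 0 = 1 := by decide
    have h1 : (Equiv.swap 0 1 : Equiv.Perm (Fin 3)) 1 = 0 := by decide
    have h2 : (Equiv.swap 0 1 : Equiv.Perm (Fin 3)) 2 = 2 := by decide
    rw [h0, h1, h2]
  have o3 : (∑ k, w (R k) (C ((Equiv.swap 0 2 : Equiv.Perm (Fin 3)) k)))
      = w (R 0) (C 2) + w (R 1) (C 1) + w (R 2) (C 0) := by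
    rw [Fin.sum_univ_three]
    have h0 : (Equiv.swap 0 2 : Equiv.Perm (Fin 3)) 0 = 2 := by decide
    have h1 : (Equiv.swap 0 2 : Equiv.Perm (Fin 3)) 1 = 1 := by decide
    have h2 : (Equiv.swap 0 2 : Equiv.Perm (Fin 3)) 2 = 0 := by decide
    rw [h0, h1, h2]
  have hEven : min (w (R 0) (C 0) + w (R 1) (C 1) + w (R 2) (C 2))
        (min (w (R 0) (C 1) + w (R 1) (C 2) + w (R 2) (C 0))
             (w (R 0) (C 2) + w (R 1) (C 0) + w (R 2) (C 1)))
      = ∑ k, w (R k) (C (τ k)) := by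
    apply le_antisymm
    · rcases bar2_perm3 τ with h | h | h | h | h | h
      · rw [h, e1]; exact min_le_left _ _
      · rw [h, e2]; exact le_trans (min_le_right _ _) (min_le_left _ _)
      · rw [h, e3]; exact le_trans (min_le_right _ _) (min_le_right _ _)
      · rw [h] at s1; exact absurd s1 (by decide)
      · rw [h] at s1; exact absurd s1 (by decide)
      · rw [h] at s1; exact absurd s1 (by decide)
    · refine le_min ?_ (le_min ?_ ?_)
      · rw [← e1]; exact m1 _
      · rw [← e2]; exact m1 _
      · rw [← e3]; exact m1 _
  have hOdd : min (w (R 0) (C 0) + w (R 1) (C 2) + w (R 2) (C 1))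
        (min (w (R 0) (C 1) + w (R 1) (C 0) + w (R 2) (C 2))
             (w (R 0) (C 2) + w (R 1) (C 1) + w (R 2) (C 0)))
      = ∑ k, w (R k) (C (τ' k)) := by
    apply le_antisymm
    · rcases bar2_perm3 τ' with h | h | h | h | h | h
      · rw [h] at s2; exact absurd s2 (by decide)
      · rw [h] at s2; exact absurd s2 (by decide)
      · rw [h] at s2; exact absurd s2 (by decide)
      · rw [h, o1]; exact min_le_left _ _
      · rw [h, o2]; exact le_trans (min_le_right _ _) (min_le_left _ _)
      · rw [h, o3]; exact le_trans (min_le_right _ _) (min_le_right _ _)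
    · refine le_min ?_ (le_min ?_ ?_)
      · rw [← o1]; exact m2 _
      · rw [← o2]; exact m2 _
      · rw [← o3]; exact m2 _
  rw [hEven, hOdd]
  exact le_antisymm (m1 τ') (m2 τ)

/-- A `Fin 3`-tuple with increasing consecutive values is strictly monotone. -/
lemma bar2_sm3 {m : ℕ} (v : Fin 3 → Fin m) (h01 : v 0 < v 1) (h12 : v 1 < v 2) :
    StrictMono v := by
  have h02 : v 0 < v 2 := lt_trans h01 h12
  intro a b hab
  fin_cases a <;> fin_cases b <;>
    first
      | exact h01
      | exact h12
      | exact h02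
      | exact absurd hab (by decide)

/-- Any injective `Fin 3`-tuple is a strictly monotone tuple composed with a permutation. -/
lemma bar2_sort3 {m : ℕ} (f : Fin 3 → Fin m)
    (h01 : f 0 ≠ f 1) (h02 : f 0 ≠ f 2) (h12 : f 1 ≠ f 2) :
    ∃ (g : Fin 3 → Fin m) (π : Equiv.Perm (Fin 3)), StrictMono g ∧ ∀ k, f k = g (π k) := by
  rcases lt_or_gt_of_ne h01 with a01 | a01 <;> rcases lt_or_gt_of_ne h02 with a02 | a02 <;>
    rcases lt_or_gt_of_ne h12 with a12 | a12
  · -- f0 < f1 < f2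
    exact ⟨f, 1, bar2_sm3 f a01 a12, fun k => rfl⟩
  · -- f0 < f2 < f1
    refine ⟨![f 0, f 2, f 1], Equiv.swap 1 2, bar2_sm3 _ a02 a12, fun k => ?_⟩
    fin_cases k <;> rfl
  · -- impossible: f2 < f0 < f1 < f2
    exact absurd (lt_trans (lt_trans a02 a01) a12) (lt_irrefl _)
  · -- f2 < f0 < f1
    refine ⟨![f 2, f 0, f 1], Equiv.swap 0 1 * Equiv.swap 1 2, bar2_sm3 _ a02 a01, fun k => ?_⟩
    fin_cases k <;> rfl
  · -- f1 < f0 < f2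
    refine ⟨![f 1, f 0, f 2], Equiv.swap 0 1, bar2_sm3 _ a01 a02, fun k => ?_⟩
    fin_cases k <;> rfl
  · -- impossible: f2 < f1 < f0 < f2
    exact absurd (lt_trans (lt_trans a12 a01) a02) (lt_irrefl _)
  · -- f1 < f2 < f0
    refine ⟨![f 1, f 2, f 0], Equiv.swap 1 2 * Equiv.swap 0 1, bar2_sm3 _ a12 a02, fun k => ?_⟩
    fin_cases k <;> rfl
  · -- f2 < f1 < f0
    refine ⟨![f 2, f 1, f 0], Equiv.swap 0 2, bar2_sm3 _ a12 a01, fun k => ?_⟩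
    fin_cases k <;> rfl
/-- Classification of columns, in unnormalized form. Here `X = xj - xk`, `Y = yj - yk`,
`P = xc - xk`, `Q = yc - yk`; assuming `0 < X ≤ Y`, a column satisfying the
positive-singularity relation has `P = Q` or (`X ≤ P` and `X ≤ Q`). -/
lemma bar2_cls (xj xk xc yj yk yc : ℝ) (hX : xk < xj) (hXY : xj - xk ≤ yj - yk)
    (heq : min (xj + yc) (min (xk + yj) (xc + yk)) =
      min (xj + yk) (min (xk + yc) (xc + yj))) :
    (xc - xk = yc - yk) ∨ (xj - xk ≤ xc - xk ∧ xj - xk ≤ yc - yk) := by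
  rcases lt_or_ge (xc - xk) (xj - xk) with hPX | hPX
  · left
    by_contra hne
    rcases lt_or_gt_of_ne hne with hlt | hgt
    · -- P < Q
      have hL : min (xj + yc) (min (xk + yj) (xc + yk)) ≤ xc + yk :=
        le_trans (min_le_right _ _) (min_le_right _ _)
      have hR : xc + yk < min (xj + yk) (min (xk + yc) (xc + yj)) :=
        lt_min (by linarith) (lt_min (by linarith) (by linarith))
      rw [heq] at hL; linarith
    · -- Q < P
      have hR : min (xj + yk) (min (xk + yc) (xc + yj)) ≤ xk + yc :=
        le_trans (min_le_right _ _) (min_le_left _ _)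
      have hL : xk + yc < min (xj + yc) (min (xk + yj) (xc + yk)) :=
        lt_min (by linarith) (lt_min (by linarith) (by linarith))
      rw [heq] at hL; linarith
  · refine Or.inr ⟨hPX, ?_⟩
    by_contra hQ
    push_neg at hQ
    have hR : min (xj + yk) (min (xk + yc) (xc + yj)) ≤ xk + yc :=
      le_trans (min_le_right _ _) (min_le_left _ _)
    have hL : xk + yc < min (xj + yc) (min (xk + yj) (xc + yk)) :=
      lt_min (by linarith) (lt_min (by linarith) (by linarith))
    rw [heq] at hL; linarith

/-- Merging step: the argmin of `x` and the argmin of `y` can be taken equal. -/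
lemma bar2_merge (xj xk xk' yj yk yk' : ℝ) (hx : xk ≤ xk') (hy : yk' ≤ yk)
    (hjx : xk < xj) (hjy : yk' < yj)
    (heq : min (xj + yk') (min (xk + yj) (xk' + yk)) =
      min (xj + yk) (min (xk + yk') (xk' + yj))) :
    xk' = xk ∧ yk = yk' := by
  have hR : min (xj + yk) (min (xk + yk') (xk' + yj)) ≤ xk + yk' :=
    le_trans (min_le_right _ _) (min_le_left _ _)
  have h3 : xk' + yk ≤ xk + yk' := by
    by_contra hcon
    push_neg at hcon
    have hL : xk + yk' < min (xj + yk') (min (xk + yj) (xk' + yk)) :=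
      lt_min (by linarith) (lt_min (by linarith) hcon)
    rw [heq] at hL; linarith
  constructor <;> linarith

/-- Core contradiction, assuming merged argmins and `X ≤ Y`. -/
lemma bar2_core2 {n : ℕ} (x y : Fin n → ℝ)
    (C : ∀ p q s : Fin n, min (x p + y s) (min (x q + y p) (x s + y q)) =
        min (x p + y q) (min (x q + y s) (x s + y p)))
    (k j : Fin n) (hkx : ∀ c, x k ≤ x c) (hky : ∀ c, y k ≤ y c)
    (hjx : x k < x j) (hjy : y k < y j) (hXY : x j - x k ≤ y j - y k)
    (mA mB : Fin n)
    (hmA : ∀ c, x c - y c ≤ x mA - y mA) (hmB : ∀ c, y c - x c ≤ y mB - x mB)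
    (h1 : ∀ c, x c - x k ≤ (x mA - y mA) + (y mB - x mB))
    (h2 : ∀ c, y c - y k ≤ (x mA - y mA) + (y mB - x mB)) : False := by
  have cls : ∀ c, (x c - x k = y c - y k) ∨
      (x j - x k ≤ x c - x k ∧ x j - x k ≤ y c - y k) := by
    intro c
    exact bar2_cls (x j) (x k) (x c) (y j) (y k) (y c) hjx hXY (C j k c)
  have hA0 : 0 ≤ (x mA - y mA) - (x k - y k) := by have := hmA k; linarith
  have hB0 : 0 ≤ (y mB - x mB) - (y k - x k) := by have := hmB k; linarith
  rcases hA0.lt_or_eq with hA | hA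
  · rcases hB0.lt_or_eq with hB | hB
    · -- both A > 0 and B > 0 : contradiction from triple (mA, mB, k)
      have hfA : x j - x k ≤ x mA - x k ∧ x j - x k ≤ y mA - y k := by
        rcases cls mA with h | h
        · exfalso; linarith
        · exact h
      have hfB : x j - x k ≤ x mB - x k ∧ x j - x k ≤ y mB - y k := by
        rcases cls mB with h | h
        · exfalso; linarith
        · exact h
      have heq2 := C mA mB k
      rcases le_total (x mB + y k) (x k + y mA) with hcase | hcase
      · have hR : min (x mA + y mB) (min (x mB + y k) (x k + y mA)) ≤ x mB + y k :=
          le_trans (min_le_right _ _) (min_le_left _ _)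
        have hL : x mB + y k < min (x mA + y k) (min (x mB + y mA) (x k + y mB)) :=
          lt_min (by linarith [hfA.2]) (lt_min (by linarith [hfA.2, hjx, hjy]) (by linarith))
        rw [heq2] at hL; linarith
      · have hR : min (x mA + y mB) (min (x mB + y k) (x k + y mA)) ≤ x k + y mA :=
          le_trans (min_le_right _ _) (min_le_right _ _)
        have hL : x k + y mA < min (x mA + y k) (min (x mB + y mA) (x k + y mB)) :=
          lt_min (by linarith) (lt_min (by linarith [hfB.1]) (by linarith))
        rw [heq2] at hL; linarith
    · -- B = 0, A > 0
      rcases cls mA with h | h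
      · linarith
      · have := h1 mA; linarith [h.2]
  · -- A = 0
    rcases cls mB with h | h
    · have := h1 j; linarith
    · have := h2 mB; linarith [h.1, h1 j]

/-- Core contradiction lemma: separate argmins `k`, `k'` for `x` and `y`. -/
lemma bar2_core {n : ℕ} (x y : Fin n → ℝ)
    (C : ∀ p q s : Fin n, min (x p + y s) (min (x q + y p) (x s + y q)) =
        min (x p + y q) (min (x q + y s) (x s + y p)))
    (k k' j : Fin n) (hk : ∀ c, x k ≤ x c) (hk' : ∀ c, y k' ≤ y c)
    (hjx : x k < x j) (hjy : y k' < y j)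
    (mA mB : Fin n)
    (hmA : ∀ c, x c - y c ≤ x mA - y mA) (hmB : ∀ c, y c - x c ≤ y mB - x mB)
    (h1 : ∀ c, x c - x k ≤ (x mA - y mA) + (y mB - x mB))
    (h2 : ∀ c, y c - y k' ≤ (x mA - y mA) + (y mB - x mB)) : False := by
  obtain ⟨ex, ey⟩ := bar2_merge (x j) (x k) (x k') (y j) (y k) (y k')
    (hk k') (hk' k) hjx hjy (C j k k')
  have hky : ∀ c, y k ≤ y c := fun c => ey ▸ hk' c
  have hjy' : y k < y j := ey ▸ hjy
  have h2' : ∀ c, y c - y k ≤ (x mA - y mA) + (y mB - x mB) := by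
    intro c; rw [ey]; exact h2 c
  rcases le_total (x j - x k) (y j - y k) with hXY | hXY
  · exact bar2_core2 x y C k j hk hky hjx hjy' hXY mA mB hmA hmB h1 h2'
  · have C' : ∀ p q s : Fin n, min (y p + x s) (min (y q + x p) (y s + x q)) =
        min (y p + x q) (min (y q + x s) (y s + x p)) := by
      intro p q s
      have h := C p s q
      calc min (y p + x s) (min (y q + x p) (y s + x q))
          = min (x p + y q) (min (x s + y p) (x q + y s)) := by
            simp [min_comm, min_left_comm, min_assoc, add_comm]
        _ = min (x p + y s) (min (x s + y q) (x q + y p)) := h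
        _ = min (y p + x q) (min (y q + x s) (y s + x p)) := by
            simp [min_comm, min_left_comm, min_assoc, add_comm]
    exact bar2_core2 y x C' k j hky hk hjy' hjx (by linarith) mB mA
      (fun c => by have := hmB c; linarith) (fun c => by have := hmA c; linarith)
      (fun c => by have := h2' c; linarith) (fun c => by have := h1 c; linarith)
/-- From the triple condition and maximality data, the middle row `r` lies on the
tropical segment between `u` and `v`. -/
lemma bar2_row {n : ℕ} (u r v : Fin n → ℝ)
    (C : ∀ p q s : Fin n,
      min ((u p - r p) + (v s - r s)) (min ((u q - r q) + (v p - r p)) ((u s - r s) + (v q - r q))) =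
      min ((u p - r p) + (v q - r q)) (min ((u q - r q) + (v s - r s)) ((u s - r s) + (v p - r p))))
    (k k' mA mB : Fin n)
    (hk : ∀ c, u k - r k ≤ u c - r c) (hk' : ∀ c, v k' - r k' ≤ v c - r c)
    (hmA : ∀ c, u c - v c ≤ u mA - v mA) (hmB : ∀ c, v c - u c ≤ v mB - u mB)
    (h1 : ∀ c, (u c - r c) - (u k - r k) ≤ (u mA - v mA) + (v mB - u mB))
    (h2 : ∀ c, (v c - r c) - (v k' - r k') ≤ (u mA - v mA) + (v mB - u mB)) :
    ∀ j, r j = min (u j + (r k - u k)) (v j + (r k' - v k')) := by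
  have key : ∀ jj, u jj - r jj = u k - r k ∨ v jj - r jj = v k' - r k' := by
    intro jj
    by_contra hcon
    push_neg at hcon
    obtain ⟨hc1, hc2⟩ := hcon
    exact bar2_core (fun c => u c - r c) (fun c => v c - r c) C k k' jj hk hk'
      (lt_of_le_of_ne (hk jj) (Ne.symm hc1)) (lt_of_le_of_ne (hk' jj) (Ne.symm hc2))
      mA mB
      (fun c => by have := hmA c; linarith)
      (fun c => by have := hmB c; linarith)
      (fun c => by have := h1 c; linarith)
      (fun c => by have := h2 c; linarith)
  intro j
  refine le_antisymm (le_min ?_ ?_) ?_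
  · have := hk j; linarith
  · have := hk' j; linarith
  · rcases key j with h | h
    · calc min (u j + (r k - u k)) (v j + (r k' - v k')) ≤ u j + (r k - u k) := min_le_left _ _
        _ = r j := by linarith
    · calc min (u j + (r k - u k)) (v j + (r k' - v k')) ≤ v j + (r k' - v k') := min_le_right _ _
        _ = r j := by linarith

/-- The positive-singularity condition in normalized (three-term min) form,
for arbitrary triples of rows and columns. -/
lemma bar2_call {d n : ℕ} (w : Matrix (Fin d) (Fin n) ℝ)
    (Hyp : ∀ (ri : Fin 3 → Fin d) (cj : Fin 3 → Fin n),
      StrictMono ri → StrictMono cj → GoodMin w ri cj)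
    (i₀ i i₁ : Fin d) (p q s : Fin n) :
    min ((w i₀ p - w i p) + (w i₁ s - w i s))
        (min ((w i₀ q - w i q) + (w i₁ p - w i p)) ((w i₀ s - w i s) + (w i₁ q - w i q))) =
    min ((w i₀ p - w i p) + (w i₁ q - w i q))
        (min ((w i₀ q - w i q) + (w i₁ s - w i s)) ((w i₀ s - w i s) + (w i₁ p - w i p))) := by
  by_cases h01 : i₀ = i
  · subst h01
    simp [min_comm, min_left_comm, min_assoc]
  by_cases h12 : i = i₁
  · subst h12
    simp [min_comm, min_left_comm, min_assoc]
  by_cases h02 : i₀ = i₁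
  · subst h02
    simp [min_comm, min_left_comm, min_assoc, add_comm]
  by_cases hpq : p = q
  · subst hpq
    simp [min_comm, min_left_comm, min_assoc, add_comm]
  by_cases hqs : q = s
  · subst hqs
    simp [min_comm, min_left_comm, min_assoc, add_comm]
  by_cases hps : p = s
  · subst hps
    simp [min_comm, min_left_comm, min_assoc, add_comm]
  -- all distinct; use the hypothesis
  obtain ⟨gR, πR, hgR, hfR⟩ := bar2_sort3 ![i₀, i, i₁] h01 h02 h12
  obtain ⟨gC, πC, hgC, hfC⟩ := bar2_sort3 ![p, q, s] hpq hps hqs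
  have GM : GoodMin w ![i₀, i, i₁] ![p, q, s] := by
    have g1 := Hyp gR gC hgR hgC
    have g2 := bar2_colperm w gR gC πC g1
    have g3 := bar2_rowperm w gR (fun k => gC (πC k)) πR g2
    have hRe : ![i₀, i, i₁] = fun k => gR (πR k) := funext hfR
    have hCe : ![p, q, s] = fun k => gC (πC k) := funext hfC
    rw [hRe, hCe]
    exact g3
  have T : min (w i₀ p + w i q + w i₁ s)
        (min (w i₀ q + w i s + w i₁ p) (w i₀ s + w i p + w i₁ q)) =
      min (w i₀ p + w i s + w i₁ q)
        (min (w i₀ q + w i p + w i₁ s) (w i₀ s + w i q + w i₁ p)) :=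
    bar2_sixmin w ![i₀, i, i₁] ![p, q, s] GM
  apply add_right_cancel (b := w i p + w i q + w i s)
  rw [← min_add_add_right, ← min_add_add_right, ← min_add_add_right, ← min_add_add_right]
  have g1 : (w i₀ p - w i p + (w i₁ s - w i s)) + (w i p + w i q + w i s)
      = w i₀ p + w i q + w i₁ s := by ring
  have g2 : (w i₀ q - w i q + (w i₁ p - w i p)) + (w i p + w i q + w i s)
      = w i₀ q + w i s + w i₁ p := by ring
  have g3 : (w i₀ s - w i s + (w i₁ q - w i q)) + (w i p + w i q + w i s)
      = w i₀ s + w i p + w i₁ q := by ring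
  have g4 : (w i₀ p - w i p + (w i₁ q - w i q)) + (w i p + w i q + w i s)
      = w i₀ p + w i s + w i₁ q := by ring
  have g5 : (w i₀ q - w i q + (w i₁ s - w i s)) + (w i p + w i q + w i s)
      = w i₀ q + w i p + w i₁ s := by ring
  have g6 : (w i₀ s - w i s + (w i₁ p - w i p)) + (w i p + w i q + w i s)
      = w i₀ s + w i q + w i₁ p := by ring
  rw [g1, g2, g3, g4, g5, g6]
  exact T
/-- Forward direction: a min-plus factorization forces even and odd minimizers. -/
lemma bar2_fwd {d n : ℕ} (w : Matrix (Fin d) (Fin n) ℝ)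
    (X : Matrix (Fin d) (Fin 2) ℝ) (Y : Matrix (Fin 2) (Fin n) ℝ)
    (hEq : ∀ i j, w i j = ⨅ k : Fin 2, (X i k + Y k j))
    (ri : Fin 3 → Fin d) (cj : Fin 3 → Fin n) :
    ∃ τ τ' : Equiv.Perm (Fin 3),
      Equiv.Perm.sign τ = 1 ∧ Equiv.Perm.sign τ' = -1 ∧
      (∀ ρ : Equiv.Perm (Fin 3),
        (∑ k, w (ri k) (cj (τ k))) ≤ ∑ k, w (ri k) (cj (ρ k))) ∧
      (∀ ρ : Equiv.Perm (Fin 3),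
        (∑ k, w (ri k) (cj (τ' k))) ≤ ∑ k, w (ri k) (cj (ρ k))) := by
  have wle : ∀ i j (e : Fin 2), w i j ≤ X i e + Y e j := by
    intro i j e
    rw [hEq]
    exact ciInf_le (Set.Finite.bddBelow (Set.finite_range _)) e
  have wmin : ∀ i j, w i j = min (X i 0 + Y 0 j) (X i 1 + Y 1 j) := by
    intro i j
    rw [hEq]
    exact bar2_iInf_fin2 _
  obtain ⟨τ₀, -, hmin⟩ := Finset.exists_min_image (Finset.univ : Finset (Equiv.Perm (Fin 3)))
    (fun ρ => ∑ k, w (ri k) (cj (ρ k))) ⟨1, Finset.mem_univ 1⟩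
  have hmin' : ∀ ρ : Equiv.Perm (Fin 3),
      (∑ k, w (ri k) (cj (τ₀ k))) ≤ ∑ k, w (ri k) (cj (ρ k)) :=
    fun ρ => hmin ρ (Finset.mem_univ ρ)
  have hch : ∀ k : Fin 3, ∃ e : Fin 2,
      w (ri k) (cj (τ₀ k)) = X (ri k) e + Y e (cj (τ₀ k)) := by
    intro k
    rcases min_cases (X (ri k) 0 + Y 0 (cj (τ₀ k))) (X (ri k) 1 + Y 1 (cj (τ₀ k))) with
      ⟨h, -⟩ | ⟨h, -⟩
    · exact ⟨0, (wmin _ _).trans h⟩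
    · exact ⟨1, (wmin _ _).trans h⟩
  choose e he using hch
  obtain ⟨k, k', hne, hee⟩ := Fintype.exists_ne_map_eq_of_card_lt e (by simp)
  have ha := he k
  have hb := he k'
  rw [hee] at ha
  have la := wle (ri k) (cj (τ₀ k')) (e k')
  have lb := wle (ri k') (cj (τ₀ k)) (e k')
  have hswap : (∑ m, w (ri m) (cj ((τ₀ * Equiv.swap k k') m))) ≤
      ∑ m, w (ri m) (cj (τ₀ m)) := by
    have hk'mem : k' ∈ (Finset.univ : Finset (Fin 3)).erase k :=
      Finset.mem_erase.mpr ⟨Ne.symm hne, Finset.mem_univ _⟩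
    have split : ∀ g : Fin 3 → ℝ,
        (∑ m, g m) = g k + (g k' + ∑ m ∈ ((Finset.univ : Finset (Fin 3)).erase k).erase k', g m) := by
      intro g
      rw [Finset.add_sum_erase _ g hk'mem, Finset.add_sum_erase _ g (Finset.mem_univ k)]
    rw [split (fun m => w (ri m) (cj ((τ₀ * Equiv.swap k k') m))),
      split (fun m => w (ri m) (cj (τ₀ m)))]
    have h3 : (∑ m ∈ ((Finset.univ : Finset (Fin 3)).erase k).erase k',
          w (ri m) (cj ((τ₀ * Equiv.swap k k') m)))
        = ∑ m ∈ ((Finset.univ : Finset (Fin 3)).erase k).erase k', w (ri m) (cj (τ₀ m)) := by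
      refine Finset.sum_congr rfl fun m hm => ?_
      obtain ⟨hmk', hm2⟩ := Finset.mem_erase.mp hm
      obtain ⟨hmk, -⟩ := Finset.mem_erase.mp hm2
      rw [Equiv.Perm.mul_apply, Equiv.swap_apply_of_ne_of_ne hmk hmk']
    have e1 : (τ₀ * Equiv.swap k k') k = τ₀ k' := by
      rw [Equiv.Perm.mul_apply, Equiv.swap_apply_left]
    have e2 : (τ₀ * Equiv.swap k k') k' = τ₀ k := by
      rw [Equiv.Perm.mul_apply, Equiv.swap_apply_right]
    simp only [e1, e2, h3]
    linarith [la, lb, ha, hb]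
  have hsw : Equiv.Perm.sign (τ₀ * Equiv.swap k k') = - Equiv.Perm.sign τ₀ := by
    rw [Equiv.Perm.sign_mul, Equiv.Perm.sign_swap hne, mul_neg_one]
  rcases Int.units_eq_one_or (Equiv.Perm.sign τ₀) with h | h
  · exact ⟨τ₀, τ₀ * Equiv.swap k k', h, by rw [hsw, h], hmin',
      fun ρ => le_trans hswap (hmin' ρ)⟩
  · exact ⟨τ₀ * Equiv.swap k k', τ₀, by rw [hsw, h]; decide, h,
      fun ρ => le_trans hswap (hmin' ρ), hmin'⟩
/-- **Theorem (3×3 minors are positive-tropical generators for rank 2).** A real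
`d × n` matrix `w` has Barvinok rank at most 2 iff every `3 × 3` submatrix of `w` is
positively tropically singular: for all rows `i₁ < i₂ < i₃` and columns `j₁ < j₂ < j₃`,
the minimum of `Σ_k w_{i_k, j_{τ(k)}}` over `τ ∈ S₃` is attained both at an even and at
an odd permutation. -/
theorem stmt_15 (d n : ℕ) (w : Matrix (Fin d) (Fin n) ℝ) :
    (∃ (X : Matrix (Fin d) (Fin 2) ℝ) (Y : Matrix (Fin 2) (Fin n) ℝ),
      ∀ i j, w i j = ⨅ k : Fin 2, (X i k + Y k j)) ↔
    (∀ (ri : Fin 3 → Fin d) (cj : Fin 3 → Fin n), StrictMono ri → StrictMono cj →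
      ∃ τ τ' : Equiv.Perm (Fin 3),
        Equiv.Perm.sign τ = 1 ∧ Equiv.Perm.sign τ' = -1 ∧
        (∀ ρ : Equiv.Perm (Fin 3),
          (∑ k, w (ri k) (cj (τ k))) ≤ ∑ k, w (ri k) (cj (ρ k))) ∧
        (∀ ρ : Equiv.Perm (Fin 3),
          (∑ k, w (ri k) (cj (τ' k))) ≤ ∑ k, w (ri k) (cj (ρ k)))) := by
  constructor
  · rintro ⟨X, Y, hEq⟩ ri cj _ _
    exact bar2_fwd w X Y hEq ri cj
  · intro Hyp
    rcases Nat.eq_zero_or_pos d with rfl | hd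
    · exact ⟨Matrix.of fun i _ => (0 : ℝ), Matrix.of fun _ _ => (0 : ℝ), fun i => i.elim0⟩
    rcases Nat.eq_zero_or_pos n with rfl | hn
    · exact ⟨Matrix.of fun _ _ => (0 : ℝ), Matrix.of fun _ j => (0 : ℝ), fun i j => j.elim0⟩
    have HypG : ∀ (ri : Fin 3 → Fin d) (cj : Fin 3 → Fin n),
        StrictMono ri → StrictMono cj → GoodMin w ri cj :=
      fun ri cj h1 h2 => Hyp ri cj h1 h2
    have cne : (Finset.univ : Finset (Fin n)).Nonempty := ⟨⟨0, hn⟩, Finset.mem_univ _⟩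
    obtain ⟨pr, -, hpr⟩ := Finset.exists_max_image (Finset.univ : Finset (Fin d × Fin d))
      (fun pr => (Finset.univ.sup' cne fun j => w pr.1 j - w pr.2 j) +
        (Finset.univ.sup' cne fun j => w pr.2 j - w pr.1 j))
      ⟨(⟨0, hd⟩, ⟨0, hd⟩), Finset.mem_univ _⟩
    obtain ⟨i₀, i₁⟩ := pr
    have main : ∀ i : Fin d, ∃ l m : ℝ, ∀ j, w i j = min (w i₀ j + l) (w i₁ j + m) := by
      intro i
      obtain ⟨k, -, hk⟩ := Finset.exists_min_image Finset.univ (fun c => w i₀ c - w i c) cne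
      obtain ⟨k', -, hk'⟩ := Finset.exists_min_image Finset.univ (fun c => w i₁ c - w i c) cne
      obtain ⟨mA, -, hmA⟩ := Finset.exists_max_image Finset.univ (fun c => w i₀ c - w i₁ c) cne
      obtain ⟨mB, -, hmB⟩ := Finset.exists_max_image Finset.univ (fun c => w i₁ c - w i₀ c) cne
      have hk2 : ∀ c, w i₀ k - w i k ≤ w i₀ c - w i c := fun c => hk c (Finset.mem_univ c)
      have hk2' : ∀ c, w i₁ k' - w i k' ≤ w i₁ c - w i c := fun c => hk' c (Finset.mem_univ c)
      have hmA2 : ∀ c, w i₀ c - w i₁ c ≤ w i₀ mA - w i₁ mA := fun c => hmA c (Finset.mem_univ c)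
      have hmB2 : ∀ c, w i₁ c - w i₀ c ≤ w i₁ mB - w i₀ mB := fun c => hmB c (Finset.mem_univ c)
      have eA : (Finset.univ.sup' cne fun j => w i₀ j - w i₁ j) = w i₀ mA - w i₁ mA :=
        le_antisymm (Finset.sup'_le _ _ fun c _ => hmA2 c) (Finset.le_sup' (fun j => w i₀ j - w i₁ j) (Finset.mem_univ mA))
      have eB : (Finset.univ.sup' cne fun j => w i₁ j - w i₀ j) = w i₁ mB - w i₀ mB :=
        le_antisymm (Finset.sup'_le _ _ fun c _ => hmB2 c) (Finset.le_sup' (fun j => w i₁ j - w i₀ j) (Finset.mem_univ mB))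
      have hmax1 := hpr (i₀, i) (Finset.mem_univ _)
      have hmax2 := hpr (i, i₁) (Finset.mem_univ _)
      dsimp only at hmax1 hmax2
      rw [eA, eB] at hmax1 hmax2
      have h1 : ∀ c, (w i₀ c - w i c) - (w i₀ k - w i k) ≤
          (w i₀ mA - w i₁ mA) + (w i₁ mB - w i₀ mB) := by
        intro c
        have b1 : w i₀ c - w i c ≤ Finset.univ.sup' cne fun j => w i₀ j - w i j :=
          Finset.le_sup' (fun j => w i₀ j - w i j) (Finset.mem_univ c)
        have b2 : w i k - w i₀ k ≤ Finset.univ.sup' cne fun j => w i j - w i₀ j :=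
          Finset.le_sup' (fun j => w i j - w i₀ j) (Finset.mem_univ k)
        linarith [hmax1]
      have h2 : ∀ c, (w i₁ c - w i c) - (w i₁ k' - w i k') ≤
          (w i₀ mA - w i₁ mA) + (w i₁ mB - w i₀ mB) := by
        intro c
        have b1 : w i₁ c - w i c ≤ Finset.univ.sup' cne fun j => w i₁ j - w i j :=
          Finset.le_sup' (fun j => w i₁ j - w i j) (Finset.mem_univ c)
        have b2 : w i k' - w i₁ k' ≤ Finset.univ.sup' cne fun j => w i j - w i₁ j :=
          Finset.le_sup' (fun j => w i j - w i₁ j) (Finset.mem_univ k')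
        linarith [hmax2]
      have hrow := bar2_row (w i₀) (w i) (w i₁) (fun p q s => bar2_call w HypG i₀ i i₁ p q s)
        k k' mA mB hk2 hk2' hmA2 hmB2 h1 h2
      exact ⟨w i k - w i₀ k, w i k' - w i₁ k', hrow⟩
    choose l m hl using main
    refine ⟨Matrix.of fun i => ![l i, m i], Matrix.of ![w i₀, w i₁], fun i j => ?_⟩
    rw [bar2_iInf_fin2]
    simp only [Matrix.of_apply, Matrix.cons_val_zero, Matrix.cons_val_one, Matrix.head_cons]
    rw [add_comm (l i), add_comm (m i)]
    exact hl i j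
end

section
/- Let n ≥ 2, let σ, π ∈ S_n be distinct permutations with σπ⁻¹ a cycle, and let w be a real n×n matrix such that the minimum of Σ_{i=1}^n w_{i,τ(i)} over all τ ∈ S_n is attained exactly at τ = σ and τ = π and at no other permutation. Then there exists an n×n matrix A over K with det(A) = 0, all entries nonzero, ord(A_{ij}) = w_{ij} for all i, j, and every leading coefficient lc(A_{ij}) a positive real number, if and only if sgn(σ) ≠ sgn(π). -/
/-!
Expand `det A = ∑ τ, sign τ • ∏ i, A i (τ i)`. The term of `τ` has order `∑ i, w i (τ i)`, so
the coefficient of `det A` at the minimal weight `m` is the sum of the products of leading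
coefficients along the minimizers `σ` and `π`, weighted by their signs. If the signs agree and
the leading coefficients are positive, this coefficient cannot vanish.

Conversely, if the signs differ, start from the monomial lift `t ^ w` and multiply its entry at
`(i₀, σ i₀)`, where `σ i₀ ≠ π i₀`, by a series `y`. The determinant is affine in `y`, of the form
`N + y * D`, where only permutations avoiding `(i₀, σ i₀)` contribute to `N` and only those
through it contribute to `D`; so `π` and `σ` are the unique minimizers there and the leading terms
are `sign π • t ^ m` and `sign σ • t ^ m`. Hence `y = -N / D` has order `0` and leading
coefficient `-sign π / sign σ = 1`.
-/

open Finset Equiv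
open scoped ComplexOrder

theorem Matrix.det_updateRow_update_mul {n R : Type*} [Fintype n] [DecidableEq n] [CommRing R]
    (M : Matrix n n R) (i j : n) (c : R) :
    (M.updateRow i (Function.update (M i) j (c * M i j))).det =
      (M.updateRow i (Function.update (M i) j 0)).det +
        c * (M.updateRow i (Pi.single j (M i j))).det := by
  have hrow : Function.update (M i) j (c * M i j) =
      Function.update (M i) j 0 + c • Pi.single j (M i j) := by
    ext k
    by_cases hk : k = j <;> simp [hk]
  rw [hrow, det_updateRow_add, det_updateRow_smul]

namespace HahnSeries

variable {Γ R : Type*}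

section Product

variable [AddCommMonoid Γ] [LinearOrder Γ] [IsOrderedCancelAddMonoid Γ]
  [CommSemiring R] [NoZeroDivisors R]

theorem orderTop_prod [Nontrivial R] {ι : Type*} (s : Finset ι) (f : ι → HahnSeries Γ R) :
    (∏ i ∈ s, f i).orderTop = ∑ i ∈ s, (f i).orderTop := by
  classical
  induction s using Finset.induction with
  | empty => simp
  | insert a s ha ih => rw [prod_insert ha, sum_insert ha, orderTop_mul, ih]

theorem leadingCoeff_prod {ι : Type*} (s : Finset ι) (f : ι → HahnSeries Γ R) :
    (∏ i ∈ s, f i).leadingCoeff = ∏ i ∈ s, (f i).leadingCoeff := by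
  classical
  induction s using Finset.induction with
  | empty => simp
  | insert a s ha ih => rw [prod_insert ha, prod_insert ha, leadingCoeff_mul, ih]

end Product

theorem coeff_eq_leadingCoeff_of_orderTop_eq [PartialOrder Γ] [Zero R] {x : HahnSeries Γ R}
    {g : Γ} (h : x.orderTop = g) : x.coeff g = x.leadingCoeff := by
  simpa [h] using coeff_untop_eq_leadingCoeff (x := x) (by simp [h])

section Determinant

variable {n : Type*} [Fintype n] [DecidableEq n] [AddCommMonoid Γ] [LinearOrder Γ]
  [IsOrderedCancelAddMonoid Γ] [CommRing R]

theorem coeff_det (A : Matrix n n (HahnSeries Γ R)) (g : Γ) :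
    A.det.coeff g = ∑ τ : Perm n, Perm.sign τ • (∏ i, A i (τ i)).coeff g := by
  rw [← Matrix.det_transpose, Matrix.det_apply, coeff_sum]
  simp only [coeff_smul, Matrix.transpose_apply]

theorem le_orderTop_det (A : Matrix n n (HahnSeries Γ R)) {m : WithTop Γ}
    (h : ∀ τ : Perm n, m ≤ (∏ i, A i (τ i)).orderTop) : m ≤ A.det.orderTop := by
  refine le_orderTop_iff_forall.2 fun g hg => ?_
  rw [coeff_det]
  exact sum_eq_zero fun τ _ => by rw [coeff_eq_zero_of_lt_orderTop (hg.trans_le (h τ)), smul_zero]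

theorem coeff_det_of_le_orderTop (A : Matrix n n (HahnSeries Γ R)) {m : Γ}
    (h : ∀ τ : Perm n, m ≤ (∏ i, A i (τ i)).orderTop) :
    A.det.coeff m = ∑ τ with (∏ i, A i (τ i)).orderTop = m,
      Perm.sign τ • (∏ i, A i (τ i)).leadingCoeff := by
  rw [coeff_det, sum_filter]
  refine sum_congr rfl fun τ _ => ?_
  split_ifs with hτ
  · rw [coeff_eq_leadingCoeff_of_orderTop_eq hτ]
  · rw [coeff_eq_zero_of_lt_orderTop (lt_of_le_of_ne (h τ) (Ne.symm hτ)), smul_zero]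

end Determinant

section Positive

variable {n : Type*} [Fintype n] [DecidableEq n] [AddCommMonoid Γ] [LinearOrder Γ]
  [IsOrderedCancelAddMonoid Γ] [CommRing R] [PartialOrder R] [IsStrictOrderedRing R]
  [NoZeroDivisors R]

theorem det_ne_zero_of_sign_eq (A : Matrix n n (HahnSeries Γ R)) (w : Matrix n n Γ)
    (hA : ∀ i j, (A i j).orderTop = w i j) (hpos : ∀ i j, 0 < (A i j).leadingCoeff)
    (τ₀ : Perm n) (hmin : ∀ τ : Perm n, ∑ i, w i (τ₀ i) ≤ ∑ i, w i (τ i))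
    (hsign : ∀ τ : Perm n, ∑ i, w i (τ i) = ∑ i, w i (τ₀ i) → Perm.sign τ = Perm.sign τ₀) :
    A.det ≠ 0 := by
  have hterm (τ : Perm n) : (∏ i, A i (τ i)).orderTop = ↑(∑ i, w i (τ i)) := by
    simp only [orderTop_prod, hA, WithTop.coe_sum]
  have hcoeff := coeff_det_of_le_orderTop A (m := ∑ i, w i (τ₀ i))
    fun τ => by rw [hterm]; exact WithTop.coe_le_coe.2 (hmin τ)
  simp only [hterm, WithTop.coe_eq_coe] at hcoeff
  set S := ({τ | ∑ i, w i (τ i) = ∑ i, w i (τ₀ i)} : Finset (Perm n))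
  have hsmul : ∑ τ ∈ S, Perm.sign τ • (∏ i, A i (τ i)).leadingCoeff =
      Perm.sign τ₀ • ∑ τ ∈ S, (∏ i, A i (τ i)).leadingCoeff := by
    rw [smul_sum]
    exact sum_congr rfl fun τ hτ => by rw [hsign τ (mem_filter.1 hτ).2]
  have hpos_sum : 0 < ∑ τ ∈ S, (∏ i, A i (τ i)).leadingCoeff :=
    sum_pos (fun τ _ => by rw [leadingCoeff_prod]; exact prod_pos fun i _ => hpos i (τ i))
      ⟨τ₀, mem_filter.2 ⟨mem_univ _, rfl⟩⟩
  intro hdet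
  rw [hdet, coeff_zero, hsmul, eq_comm, smul_eq_zero_iff_eq] at hcoeff
  exact hpos_sum.ne' hcoeff

end Positive

section Monomial

variable {n : Type*} [Fintype n] [DecidableEq n] [AddCommMonoid Γ] [LinearOrder Γ]
  [IsOrderedCancelAddMonoid Γ] [CommRing R] [IsDomain R]

variable (R) in
noncomputable def monomialMatrix (w : Matrix n n Γ) (p : n → n → Prop) [DecidableRel p] :
    Matrix n n (HahnSeries Γ R) :=
  Matrix.of fun i j => if p i j then single (w i j) 1 else 0

theorem orderTop_and_leadingCoeff_det_monomialMatrix (w : Matrix n n Γ) (p : n → n → Prop)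
    [DecidableRel p] (τ₀ : Perm n) (h₀ : ∀ i, p i (τ₀ i))
    (hlt : ∀ τ ≠ τ₀, (∀ i, p i (τ i)) → ∑ i, w i (τ₀ i) < ∑ i, w i (τ i)) :
    (monomialMatrix R w p).det.orderTop = ↑(∑ i, w i (τ₀ i)) ∧
      (monomialMatrix R w p).det.leadingCoeff = Perm.sign τ₀ • 1 := by
  set M := monomialMatrix R w p
  have hterm (τ : Perm n) (hτ : ∀ i, p i (τ i)) :
      (∏ i, M i (τ i)).orderTop = ↑(∑ i, w i (τ i)) ∧ (∏ i, M i (τ i)).leadingCoeff = 1 := by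
    simp [M, monomialMatrix, hτ, orderTop_prod, leadingCoeff_prod, WithTop.coe_sum]
  have hzero (τ : Perm n) (hτ : ¬∀ i, p i (τ i)) : ∏ i, M i (τ i) = 0 := by
    obtain ⟨i, hi⟩ := not_forall.1 hτ
    exact prod_eq_zero (mem_univ i) (if_neg hi)
  have hle (τ : Perm n) : ↑(∑ i, w i (τ₀ i)) ≤ (∏ i, M i (τ i)).orderTop := by
    by_cases hτ : ∀ i, p i (τ i)
    · rw [(hterm τ hτ).1, WithTop.coe_le_coe]
      rcases eq_or_ne τ τ₀ with rfl | hne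
      · exact le_rfl
      · exact (hlt τ hne hτ).le
    · simp [hzero τ hτ]
  have hcoeff : M.det.coeff (∑ i, w i (τ₀ i)) = Perm.sign τ₀ • 1 := by
    rw [coeff_det_of_le_orderTop M hle, ← (hterm τ₀ h₀).2]
    refine sum_eq_single_of_mem τ₀ (mem_filter.2 ⟨mem_univ _, (hterm τ₀ h₀).1⟩) fun τ hτ hne => ?_
    by_cases hτp : ∀ i, p i (τ i)
    · have hτ := (mem_filter.1 hτ).2
      rw [(hterm τ hτp).1, WithTop.coe_eq_coe] at hτ
      exact absurd hτ (hlt τ hne hτp).ne'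
    · rw [hzero τ hτp, leadingCoeff_zero, smul_zero]
  have hne : M.det.coeff (∑ i, w i (τ₀ i)) ≠ 0 := by
    rw [hcoeff, Ne, smul_eq_zero_iff_eq]
    exact one_ne_zero
  have hord := le_antisymm (orderTop_le_of_coeff_ne_zero hne) (le_orderTop_det M hle)
  exact ⟨hord, by rw [← coeff_eq_leadingCoeff_of_orderTop_eq hord, hcoeff]⟩

end Monomial

theorem orderTop_eq_zero_and_leadingCoeff_eq_one_of_mul_eq [AddCommMonoid Γ] [LinearOrder Γ]
    [IsOrderedCancelAddMonoid Γ] [CommRing R] [IsDomain R] {x y z : HahnSeries Γ R}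
    (h : x * y = z) (hy : y ≠ 0) (hord : y.orderTop = z.orderTop)
    (hlc : y.leadingCoeff = z.leadingCoeff) : x.orderTop = 0 ∧ x.leadingCoeff = 1 := by
  subst h
  rw [orderTop_mul] at hord
  rw [leadingCoeff_mul] at hlc
  refine ⟨WithTop.add_right_cancel (orderTop_ne_top.2 hy) (by rw [zero_add, ← hord]), ?_⟩
  exact (mul_eq_right₀ (leadingCoeff_ne_zero.2 hy)).1 hlc.symm

section Field

variable {n Γ K : Type*} [Fintype n] [DecidableEq n] [AddCommGroup Γ] [LinearOrder Γ]
  [IsOrderedAddMonoid Γ] [Field K]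

theorem exists_det_eq_zero_of_sign_ne (w : Matrix n n Γ) (σ π : Perm n)
    (hπ : ∑ i, w i (π i) = ∑ i, w i (σ i))
    (hlt : ∀ τ : Perm n, τ ≠ σ → τ ≠ π → ∑ i, w i (σ i) < ∑ i, w i (τ i))
    (hsign : Perm.sign σ ≠ Perm.sign π) :
    ∃ A : Matrix n n (HahnSeries Γ K), A.det = 0 ∧
      ∀ i j, (A i j).orderTop = w i j ∧ (A i j).leadingCoeff = 1 := by
  obtain ⟨i₀, hi₀⟩ : ∃ i, σ i ≠ π i := by
    by_contra! h
    exact hsign (congrArg _ (Equiv.ext h))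
  set j₀ := σ i₀
  set W := monomialMatrix K w fun _ _ => True
  set N := (monomialMatrix K w fun i j => ¬(i = i₀ ∧ j = j₀)).det
  set D := (monomialMatrix K w fun i j => i = i₀ → j = j₀).det
  obtain ⟨hNord, hNlc⟩ : N.orderTop = ↑(∑ i, w i (σ i)) ∧ N.leadingCoeff = Perm.sign π • 1 := by
    rw [← hπ]
    refine orderTop_and_leadingCoeff_det_monomialMatrix w _ π
      (fun i ⟨hi, hj⟩ => hi₀ (by rw [← hj, hi])) fun τ hτπ hτ => ?_
    rw [hπ]
    exact hlt τ (fun hτσ => hτ i₀ ⟨rfl, by rw [hτσ]⟩) hτπ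
  obtain ⟨hDord, hDlc⟩ : D.orderTop = ↑(∑ i, w i (σ i)) ∧ D.leadingCoeff = Perm.sign σ • 1 :=
    orderTop_and_leadingCoeff_det_monomialMatrix w _ σ (fun i hi => by rw [hi]) fun τ hτσ hτ =>
      hlt τ hτσ fun hτπ => hi₀ (by rw [← hτ i₀ rfl, hτπ])
  have hD : D ≠ 0 := by simp [← orderTop_ne_top, hDord]
  set y := -N / D
  obtain ⟨hyord, hylc⟩ : y.orderTop = 0 ∧ y.leadingCoeff = 1 := by
    refine orderTop_eq_zero_and_leadingCoeff_eq_one_of_mul_eq (div_mul_cancel₀ _ hD) hD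
      (by rw [orderTop_neg, hNord, hDord]) ?_
    rw [leadingCoeff_neg, hNlc, hDlc, Int.units_ne_iff_eq_neg.1 hsign, Units.neg_smul]
  refine ⟨W.updateRow i₀ (Function.update (W i₀) j₀ (y * W i₀ j₀)), ?_, fun i j => ?_⟩
  · have hW₀ : W.updateRow i₀ (Function.update (W i₀) j₀ 0) =
        monomialMatrix K w fun i j => ¬(i = i₀ ∧ j = j₀) := by
      ext i j
      by_cases hi : i = i₀ <;> by_cases hj : j = j₀ <;> simp [W, monomialMatrix, hi, hj]
    have hW₁ : W.updateRow i₀ (Pi.single j₀ (W i₀ j₀)) =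
        monomialMatrix K w fun i j => i = i₀ → j = j₀ := by
      ext i j
      by_cases hi : i = i₀ <;> by_cases hj : j = j₀ <;> simp [W, monomialMatrix, hi, hj]
    rw [Matrix.det_updateRow_update_mul, hW₀, hW₁, div_mul_cancel₀ _ hD, add_neg_cancel]
  · by_cases hi : i = i₀ <;> by_cases hj : j = j₀ <;>
      simp [W, monomialMatrix, hi, hj, hyord, hylc]

end Field

theorem orderTop_eq_and_leadingCoeff_pos_iff [LinearOrder Γ] [Zero Γ]
    (x : HahnSeries Γ ℂ) (a : Γ) :
    (x ≠ 0 ∧ x.order = a ∧ (x.coeff x.order).im = 0 ∧ 0 < (x.coeff x.order).re) ↔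
      x.orderTop = a ∧ 0 < x.leadingCoeff := by
  rw [leadingCoeff_eq, Complex.pos_iff, eq_comm (a := (0 : ℝ))]
  constructor
  · rintro ⟨hx, rfl, him, hre⟩
    exact ⟨(order_eq_orderTop_of_ne_zero hx).symm, hre, him⟩
  · rintro ⟨hord, hre, him⟩
    have hx : x ≠ 0 := by simp [← orderTop_ne_top, hord]
    refine ⟨hx, ?_, him, hre⟩
    rw [← WithTop.coe_inj, order_eq_orderTop_of_ne_zero hx, hord]

end HahnSeries

theorem stmt_16_general (n : ℕ) (σ π : Equiv.Perm (Fin n))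
    (w : Matrix (Fin n) (Fin n) ℝ)
    (hmin : ∀ τ : Equiv.Perm (Fin n), (∑ i, w i (σ i)) ≤ ∑ i, w i (τ i))
    (hπ : (∑ i, w i (π i)) = ∑ i, w i (σ i))
    (honly : ∀ τ : Equiv.Perm (Fin n),
      (∑ i, w i (τ i)) = (∑ i, w i (σ i)) → τ = σ ∨ τ = π) :
    (∃ A : Matrix (Fin n) (Fin n) (HahnSeries ℝ ℂ), A.det = 0 ∧
      ∀ i j, A i j ≠ 0 ∧ (A i j).order = w i j ∧
        ((A i j).coeff ((A i j).order)).im = 0 ∧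
        0 < ((A i j).coeff ((A i j).order)).re) ↔
    Equiv.Perm.sign σ ≠ Equiv.Perm.sign π := by
  simp only [HahnSeries.orderTop_eq_and_leadingCoeff_pos_iff]
  constructor
  · rintro ⟨A, hdet, hA⟩ hsign
    refine HahnSeries.det_ne_zero_of_sign_eq A w (fun i j => (hA i j).1) (fun i j => (hA i j).2)
      σ hmin (fun τ hτ => ?_) hdet
    rcases honly τ hτ with rfl | rfl
    exacts [rfl, hsign.symm]
  · intro hsign
    have hlt (τ : Perm (Fin n)) (hτσ : τ ≠ σ) (hτπ : τ ≠ π) : ∑ i, w i (σ i) < ∑ i, w i (τ i) :=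
      (hmin τ).lt_of_ne fun h => (honly τ h.symm).elim hτσ hτπ
    obtain ⟨A, hdet, hA⟩ := HahnSeries.exists_det_eq_zero_of_sign_ne (K := ℂ) w σ π hπ hlt hsign
    exact ⟨A, hdet, fun i j => ⟨(hA i j).1, (hA i j).2 ▸ one_pos⟩⟩

/-- **Proposition (positivity of maximal cones of the determinantal hypersurface),
pointwise form.** Let `σ ≠ π` be permutations with `σπ⁻¹` a cycle, and let `w` be a
real `n × n` matrix such that the minimum of `Σᵢ w_{i,τ(i)}` over `τ ∈ S_n` is attained
exactly at `τ = σ` and `τ = π`. Then `w` admits a singular lift to `K = HahnSeries ℝ ℂ`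
with nonzero entries, entrywise order `w` and positive real leading coefficients iff
`sgn σ ≠ sgn π`. -/
theorem stmt_16 (n : ℕ) (hn : 2 ≤ n) (σ π : Equiv.Perm (Fin n)) (hne : σ ≠ π)
    (hc : (σ * π⁻¹).IsCycle) (w : Matrix (Fin n) (Fin n) ℝ)
    (hmin : ∀ τ : Equiv.Perm (Fin n), (∑ i, w i (σ i)) ≤ ∑ i, w i (τ i))
    (hπ : (∑ i, w i (π i)) = ∑ i, w i (σ i))
    (honly : ∀ τ : Equiv.Perm (Fin n),
      (∑ i, w i (τ i)) = (∑ i, w i (σ i)) → τ = σ ∨ τ = π) :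
    (∃ A : Matrix (Fin n) (Fin n) (HahnSeries ℝ ℂ), A.det = 0 ∧
      ∀ i j, A i j ≠ 0 ∧ (A i j).order = w i j ∧
        ((A i j).coeff ((A i j).order)).im = 0 ∧
        0 < ((A i j).coeff ((A i j).order)).re) ↔
    Equiv.Perm.sign σ ≠ Equiv.Perm.sign π :=
  stmt_16_general n σ π w hmin hπ honly
end
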